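/- arXiv:2005.09844 — 10 statements merged into one kernel-verified Lean document; each statement's English description precedes it below -/
import Mathlib

section
/- Every group homomorphism from the direct product ℤ^ω (the Baer–Specker group) to ℤ factors through a finite subproduct; equivalently, Hom(ℤ^ω, ℤ) is isomorphic to the direct sum ⊕_ω ℤ. -/
/-!
Write `d i = f (Pi.single i 1)`. If `p` divides every coordinate of `x` from index `n` on, then
`p ∣ f x - ∑ i < n, x i * d i`. When all `d i` vanish, `f x` is therefore divisible by every
power of `2` if `2 ^ i ∣ x i` for all `i`, and likewise for `3`; every sequence is the sum of two
such sequences, so `f = 0`.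

In general, evaluate `f` at `P n = ∏ i < n, q i` with `q i = 2 * |d i| + 2`. The quotients
`t n = (f P - ∑ i < n, P i * d i) / P n` satisfy `t n = q n * t (n + 1) + d n` with
`2 * |d n| < q n`, a balanced mixed-radix expansion of `f P`: `|t n|` at least halves at each step,
so `t` and hence `d` vanish eventually.
-/

theorem Int.eq_zero_of_forall_pow_dvd {k m : ℤ} (hk : 2 ≤ k) (h : ∀ n : ℕ, k ^ n ∣ m) :
    m = 0 := by
  by_contra hm
  obtain ⟨n, hn⟩ := (Int.finiteMultiplicity_iff (a := k)).2 ⟨by omega, hm⟩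
  exact hn (h _)

theorem Int.two_mul_abs_le_of_eq_mul_add {t t' q d : ℤ} (h : t = q * t' + d) (hq : 2 ≤ q)
    (hd : 2 * |d| < q) : 2 * |t'| ≤ |t| := by
  have hqt' : q * |t'| ≤ |t| + |d| := by
    rw [← abs_of_pos (by omega : 0 < q), ← abs_mul, show q * t' = t - d by omega]
    exact abs_sub _ _
  by_contra! hlt
  nlinarith [mul_le_mul_of_nonneg_left hlt (by omega : (0 : ℤ) ≤ q),
    mul_nonneg (by omega : (0 : ℤ) ≤ q - 2) (abs_nonneg t)]

theorem Int.exists_forall_ge_eq_zero_of_two_mul_abs_le {t : ℕ → ℤ}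
    (h : ∀ n, 2 * |t (n + 1)| ≤ |t n|) : ∃ N, ∀ n ≥ N, t n = 0 := by
  have hpow : ∀ n, 2 ^ n * |t n| ≤ |t 0| := by
    intro n
    induction n with
    | zero => simp
    | succ n ih => rw [pow_succ, mul_assoc]; nlinarith [h n, pow_pos (two_pos : (0 : ℤ) < 2) n]
  refine ⟨(t 0).natAbs, fun n hn => by_contra fun hne => ?_⟩
  have h1 : |t 0| < 2 ^ n := by
    calc |t 0| = ((t 0).natAbs : ℤ) := Int.abs_eq_natAbs _
      _ < 2 ^ (t 0).natAbs := by exact_mod_cast Nat.lt_two_pow_self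
      _ ≤ 2 ^ n := pow_le_pow_right₀ (by norm_num) hn
  have h2 : (2 : ℤ) ^ n ≤ 2 ^ n * |t n| :=
    le_mul_of_one_le_right (by positivity) (Int.one_le_abs hne)
  linarith [hpow n]

theorem Int.exists_forall_ge_eq_zero_of_eq_mul_add {t q d : ℕ → ℤ}
    (h : ∀ n, t n = q n * t (n + 1) + d n) (hq : ∀ n, 2 ≤ q n) (hd : ∀ n, 2 * |d n| < q n) :
    ∃ N, ∀ n ≥ N, d n = 0 := by
  obtain ⟨N, hN⟩ := Int.exists_forall_ge_eq_zero_of_two_mul_abs_le fun n =>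
    Int.two_mul_abs_le_of_eq_mul_add (h n) (hq n) (hd n)
  refine ⟨N, fun n hn => ?_⟩
  have := h n
  rw [hN n hn, hN (n + 1) (by omega)] at this
  omega

theorem exists_add_eq_pow_dvd_of_isCoprime {a b : ℤ} (hab : IsCoprime a b) (x : ℕ → ℤ) :
    ∃ y z : ℕ → ℤ, y + z = x ∧ (∀ i, a ^ i ∣ y i) ∧ ∀ i, b ^ i ∣ z i := by
  choose u v huv using fun i : ℕ => hab.pow (m := i) (n := i)
  refine ⟨fun i => x i * u i * a ^ i, fun i => x i * v i * b ^ i, funext fun i => ?_,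
    fun i => dvd_mul_left _ _, fun i => dvd_mul_left _ _⟩
  show x i * u i * a ^ i + x i * v i * b ^ i = x i
  linear_combination x i * huv i

namespace AddMonoidHom

variable {ι : Type*}

theorem dvd_apply_of_forall_dvd (f : (ι → ℤ) →+ ℤ) {p : ℤ} {x : ι → ℤ} (h : ∀ i, p ∣ x i) :
    p ∣ f x := by
  choose y hy using h
  rw [show x = p • y from funext hy, map_zsmul, smul_eq_mul]
  exact dvd_mul_right _ _

theorem dvd_apply_sub_sum_single [DecidableEq ι] (f : (ι → ℤ) →+ ℤ) (s : Finset ι) {p : ℤ}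
    {x : ι → ℤ} (h : ∀ i ∉ s, p ∣ x i) :
    p ∣ f x - ∑ i ∈ s, x i * f (Pi.single i 1) := by
  have hsingle : ∀ i, f (Pi.single i (x i)) = x i * f (Pi.single i 1) := fun i => by
    rw [← smul_eq_mul, ← map_zsmul, ← Pi.single_smul', smul_eq_mul, mul_one]
  simp only [← hsingle, ← map_sum, ← map_sub]
  refine f.dvd_apply_of_forall_dvd fun i => ?_
  by_cases hi : i ∈ s <;> simp [hi, h]

theorem apply_eq_zero_of_pow_dvd (f : (ℕ → ℤ) →+ ℤ) (hf : ∀ i, f (Pi.single i 1) = 0) {k : ℤ}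
    (hk : 2 ≤ k) {x : ℕ → ℤ} (hx : ∀ i, k ^ i ∣ x i) : f x = 0 := by
  refine Int.eq_zero_of_forall_pow_dvd hk fun n => ?_
  have := f.dvd_apply_sub_sum_single (Finset.range n) fun i hi =>
    (pow_dvd_pow k (not_lt.1 (Finset.mem_range.not.1 hi))).trans (hx i)
  simpa [hf] using this

theorem eq_zero_of_map_single_eq_zero (f : (ℕ → ℤ) →+ ℤ) (hf : ∀ i, f (Pi.single i 1) = 0) :
    f = 0 := by
  ext x
  obtain ⟨y, z, rfl, hy, hz⟩ := exists_add_eq_pow_dvd_of_isCoprime (a := 2) (b := 3)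
    (by norm_num [Int.isCoprime_iff_gcd_eq_one]) x
  rw [map_add, f.apply_eq_zero_of_pow_dvd hf le_rfl hy,
    f.apply_eq_zero_of_pow_dvd hf (by norm_num) hz, add_zero, zero_apply]

theorem exists_forall_ge_map_single_eq_zero (f : (ℕ → ℤ) →+ ℤ) :
    ∃ N, ∀ i ≥ N, f (Pi.single i 1) = 0 := by
  set d : ℕ → ℤ := fun i => f (Pi.single i 1)
  set q : ℕ → ℤ := fun i => 2 * |d i| + 2
  set P : ℕ → ℤ := fun n => ∏ i ∈ Finset.range n, q i
  have hP : ∀ n, P (n + 1) = P n * q n := fun n => Finset.prod_range_succ _ _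
  have hP0 : ∀ n, P n ≠ 0 := fun n => Finset.prod_ne_zero_iff.2 fun i _ => by positivity
  set S : ℕ → ℤ := fun n => ∑ i ∈ Finset.range n, P i * d i
  have hS : ∀ n, S (n + 1) = S n + P n * d n := fun n => Finset.sum_range_succ _ _
  have hdvd : ∀ n, P n ∣ f P - S n := fun n => f.dvd_apply_sub_sum_single _ fun i hi =>
    Finset.prod_dvd_prod_of_subset _ _ _ (Finset.range_subset_range.2 (by simpa using hi))
  choose t ht using hdvd
  refine Int.exists_forall_ge_eq_zero_of_eq_mul_add (t := t) (q := q) (fun n => ?_)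
    (fun n => le_add_of_nonneg_left (by positivity)) (fun n => lt_add_of_pos_right _ two_pos)
  refine mul_left_cancel₀ (hP0 n) ?_
  linear_combination ht (n + 1) - ht n + t (n + 1) * hP n + hS n

theorem map_eq_zero_of_forall_lt_eq_zero (f : (ℕ → ℤ) →+ ℤ) {n : ℕ}
    (hf : ∀ i ≥ n, f (Pi.single i 1) = 0) {x : ℕ → ℤ} (hx : ∀ i < n, x i = 0) :
    f x = 0 := by
  let c : ℕ → ℤ := fun i => if n ≤ i then 1 else 0
  have hc : f.comp (AddMonoidHom.mulLeft c) = 0 := by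
    refine eq_zero_of_map_single_eq_zero _ fun i => ?_
    have hcsingle : c * Pi.single i 1 = Pi.single i (c i) := by
      rw [← Pi.single_mul_right, mul_one]
    by_cases hi : n ≤ i <;> simp [hcsingle, c, hi, hf]
  have hcx : c * x = x := funext fun i => by
    by_cases hi : n ≤ i
    · simp [c, hi]
    · simp [c, hi, hx i (not_le.1 hi)]
  simpa [hcx] using DFunLike.congr_fun hc x

end AddMonoidHom

theorem linearCombination_evalAddMonoidHom_apply_single (g : ℕ →₀ ℤ) (j : ℕ) :
    Finsupp.linearCombination ℤ (Pi.evalAddMonoidHom fun _ : ℕ => ℤ) g (Pi.single j 1) = g j := by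
  simp [Finsupp.linearCombination_apply, Finsupp.sum, Pi.single_apply, eq_comm]

theorem bijective_linearCombination_evalAddMonoidHom :
    Function.Bijective (Finsupp.linearCombination ℤ (Pi.evalAddMonoidHom fun _ : ℕ => ℤ)) := by
  refine ⟨fun g g' h => Finsupp.ext fun j => ?_, fun f => ?_⟩
  · simpa only [linearCombination_evalAddMonoidHom_apply_single] using
      DFunLike.congr_fun h (Pi.single j 1)
  · obtain ⟨N, hN⟩ := f.exists_forall_ge_map_single_eq_zero
    refine ⟨Finsupp.onFinset (Finset.range N) (fun i => f (Pi.single i 1)) fun i hi =>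
      Finset.mem_range.2 (not_le.1 fun h => hi (hN i h)), ?_⟩
    refine sub_eq_zero.1 (AddMonoidHom.eq_zero_of_map_single_eq_zero _ fun j => ?_)
    simp [linearCombination_evalAddMonoidHom_apply_single]

/-- The Specker theorem: every homomorphism ℤ^ω → ℤ factors through a finite
subproduct; equivalently Hom(ℤ^ω, ℤ) ≅ ⊕_ω ℤ. -/
theorem specker_theorem :
    (∀ h : (ℕ → ℤ) →+ ℤ, ∃ n : ℕ, ∀ x : ℕ → ℤ, (∀ i < n, x i = 0) → h x = 0) ∧
    Nonempty (((ℕ → ℤ) →+ ℤ) ≃+ (ℕ →₀ ℤ)) := by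
  refine ⟨fun h => ?_, ?_⟩
  · obtain ⟨n, hn⟩ := h.exists_forall_ge_map_single_eq_zero
    exact ⟨n, fun x hx => h.map_eq_zero_of_forall_lt_eq_zero hn hx⟩
  · exact ⟨(AddEquiv.ofBijective _ bijective_linearCombination_evalAddMonoidHom).symm⟩
end

section
/- There is a group isomorphism Hom(Hom(⊕_ω ℤ, ℤ), ℤ) ≅ ⊕_ω ℤ. -/
/-! Hom(⊕ℤ, ℤ) ≅ ℤ^ℕ by freeness, and by Specker's theorem φ ↦ (φ eₙ)ₙ is an isomorphism
Hom(ℤ^ℕ, ℤ) ≅ ⊕ℤ. The basic congruence is that φ x ≡ Σ_{k<N} xₖ φ(eₖ) mod d whenever d divides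
every coordinate of x beyond N.

Injectivity: every x is u + v with 2ⁿ ∣ uₙ and 3ⁿ ∣ vₙ, so if φ kills all eₙ then φ u is divisible
by every power of 2 and φ v by every power of 3.

Finite support: choose weights M₀ ∣ M₁ ∣ ⋯ growing so fast that 2|s_N| < M_N for the partial sums
s_N = Σ_{k<N} Mₖ φ(eₖ). Then φ M ≡ s_N mod M_N forces φ M = s_N for all large N, hence
M_N φ(e_N) = s_{N+1} - s_N = 0. -/

open Finset Filter

section

variable {ι : Type*}

theorem dvd_apply_of_forall_dvd (φ : (ι → ℤ) →+ ℤ) {d : ℤ} {y : ι → ℤ} (h : ∀ i, d ∣ y i) :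
    d ∣ φ y := by
  have : y = d • fun i => y i / d := funext fun i => (Int.mul_ediv_cancel' (h i)).symm
  rw [this, map_zsmul, smul_eq_mul]
  exact dvd_mul_right _ _

theorem dvd_apply_sub_sum_of_forall_dvd [DecidableEq ι] (φ : (ι → ℤ) →+ ℤ) {d : ℤ} {x : ι → ℤ}
    (s : Finset ι) (h : ∀ i ∉ s, d ∣ x i) :
    d ∣ φ x - ∑ i ∈ s, x i * φ (Pi.single i 1) := by
  have hsingle : ∀ i, x i * φ (Pi.single i 1) = φ (Pi.single i (x i)) := fun i => by
    rw [← smul_eq_mul, ← map_zsmul, ← Pi.single_smul, smul_eq_mul, mul_one]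
  simp only [hsingle, ← map_sum, ← map_sub]
  refine dvd_apply_of_forall_dvd φ fun i => ?_
  by_cases hi : i ∈ s <;> simp [sum_pi_single, hi, h]

end

theorem Int.eq_zero_of_forall_pow_dvd_s1 {b m : ℤ} (hb : b.natAbs ≠ 1) (h : ∀ n : ℕ, b ^ n ∣ m) :
    m = 0 := by
  by_contra hm
  exact (FiniteMultiplicity.not_iff_forall.mpr h) (Int.finiteMultiplicity_iff.mpr ⟨hb, hm⟩)

theorem apply_eq_zero_of_forall_pow_dvd {φ : (ℕ → ℤ) →+ ℤ} (hφ : ∀ n, φ (Pi.single n 1) = 0)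
    {b : ℤ} (hb : b.natAbs ≠ 1) {x : ℕ → ℤ} (hx : ∀ n, b ^ n ∣ x n) : φ x = 0 := by
  refine Int.eq_zero_of_forall_pow_dvd_s1 hb fun N => ?_
  have := dvd_apply_sub_sum_of_forall_dvd φ (range N) fun n hn =>
    (pow_dvd_pow b (by simpa using hn)).trans (hx n)
  simpa [hφ] using this

theorem eq_zero_of_apply_single_eq_zero {φ : (ℕ → ℤ) →+ ℤ} (hφ : ∀ n, φ (Pi.single n 1) = 0) :
    φ = 0 := by
  ext x
  have hcop : ∀ n : ℕ, IsCoprime ((2 : ℤ) ^ n) (3 ^ n) := fun n =>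
    (Int.isCoprime_iff_gcd_eq_one.mpr rfl).pow
  choose a c hac using hcop
  have hx : x = (fun n => 2 ^ n * (a n * x n)) + fun n => 3 ^ n * (c n * x n) :=
    funext fun n => by simp only [Pi.add_apply]; linear_combination (-x n) * hac n
  rw [hx, map_add,
    apply_eq_zero_of_forall_pow_dvd hφ (b := 2) (by decide) fun n => dvd_mul_right _ _,
    apply_eq_zero_of_forall_pow_dvd hφ (b := 3) (by decide) fun n => dvd_mul_right _ _]
  rfl

def weightsAndPartialSums (c : ℕ → ℤ) : ℕ → ℤ × ℤ
  | 0 => (1, 0)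
  | n + 1 =>
    let (M, s) := weightsAndPartialSums c n
    (M * (2 * |s + M * c n| + 2), s + M * c n)

theorem exists_weights_dominating_partial_sums (c : ℕ → ℤ) :
    ∃ M : ℕ → ℤ, (∀ n : ℕ, (n : ℤ) < M n) ∧ (∀ {m n}, m ≤ n → M m ∣ M n) ∧
      ∀ N, 2 * |∑ k ∈ range N, M k * c k| < M N := by
  set M := fun n => (weightsAndPartialSums c n).1
  have hs : ∀ n, (weightsAndPartialSums c n).2 = ∑ k ∈ range n, M k * c k := by
    intro n
    induction n with
    | zero => rfl
    | succ n ih => simp [weightsAndPartialSums, sum_range_succ, ih, M]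
  have hM : ∀ n, M (n + 1) = M n * (2 * |∑ k ∈ range (n + 1), M k * c k| + 2) := by
    intro n
    simp [M, weightsAndPartialSums, ← hs]
  have hpos : ∀ n : ℕ, (n : ℤ) < M n := by
    intro n
    induction n with
    | zero => exact one_pos
    | succ n ih =>
      rw [hM]; push_cast
      nlinarith [abs_nonneg (∑ k ∈ range (n + 1), M k * c k)]
  refine ⟨M, hpos, fun {m n} hmn => ?_, fun N => ?_⟩
  · induction n, hmn using Nat.le_induction with
    | base => rfl
    | succ n _ ih => exact ih.trans ⟨_, hM n⟩
  · cases N with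
    | zero => simpa using hpos 0
    | succ n =>
      rw [hM]
      nlinarith [abs_nonneg (∑ k ∈ range (n + 1), M k * c k), hpos n]

theorem eventually_apply_single_eq_zero (φ : (ℕ → ℤ) →+ ℤ) :
    ∀ᶠ n in atTop, φ (Pi.single n 1) = 0 := by
  set c := fun n => φ (Pi.single n 1)
  obtain ⟨M, hM, hdvd, hsum⟩ := exists_weights_dominating_partial_sums c
  set s := fun N => ∑ k ∈ range N, M k * c k
  have hs : ∀ᶠ N in atTop, φ M = s N := by
    filter_upwards [eventually_ge_atTop (2 * |φ M|).toNat] with N hN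
    have hlarge : 2 * |φ M| < M N := by have := hM N; omega
    have hmod := dvd_apply_sub_sum_of_forall_dvd φ (d := M N) (range N) fun n hn =>
      hdvd (by simpa using hn)
    have habs : |φ M - s N| < M N := by
      linarith [abs_sub (φ M) (s N), hsum N]
    exact sub_eq_zero.mp (Int.eq_zero_of_abs_lt_dvd hmod habs)
  filter_upwards [hs, (tendsto_add_atTop_nat 1).eventually hs] with N hN hN1
  have : M N * c N = 0 := by
    have : s (N + 1) = s N + M N * c N := sum_range_succ _ _
    omega
  exact (mul_eq_zero.mp this).resolve_left (by have := hM N; omega)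

theorem finite_support_apply_single (φ : (ℕ → ℤ) →+ ℤ) :
    (Function.support fun n => φ (Pi.single n 1)).Finite := by
  have := eventually_apply_single_eq_zero φ
  rwa [← Nat.cofinite_eq_atTop, eventually_cofinite] at this

noncomputable def speckerEquiv : ((ℕ → ℤ) →+ ℤ) ≃+ (ℕ →₀ ℤ) :=
  AddEquiv.ofBijective
    (AddMonoidHom.mk' (fun φ => Finsupp.ofSupportFinite _ (finite_support_apply_single φ))
      fun φ ψ => Finsupp.ext fun n => rfl)
    ⟨fun φ ψ h => sub_eq_zero.mp (eq_zero_of_apply_single_eq_zero fun n => by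
        simpa [sub_eq_zero, Finsupp.ofSupportFinite_coe] using DFunLike.congr_fun h n),
      fun x => ⟨x.sum fun n a => a • Pi.evalAddMonoidHom (fun _ => ℤ) n, Finsupp.ext fun n => by
        simp [Finsupp.ofSupportFinite_coe, Pi.single_apply, eq_comm]⟩⟩

/-- Hom(Hom(⊕_ω ℤ, ℤ), ℤ) ≅ ⊕_ω ℤ. -/
theorem double_dual_of_countable_free_abelian :
    Nonempty (((((ℕ →₀ ℤ) →+ ℤ)) →+ ℤ) ≃+ (ℕ →₀ ℤ)) := by
  let dualFinsupp : ((ℕ →₀ ℤ) →+ ℤ) ≃+ (ℕ → ℤ) :=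
    Finsupp.liftAddHom.symm.trans (AddEquiv.piCongrRight fun _ => (zmultiplesAddHom ℤ).symm)
  exact ⟨dualFinsupp.addMonoidHomCongrLeft.trans speckerEquiv⟩
end

section
/- The groups ℤ^ω, (⊕_ω ℤ) ⊕ ℤ^ω, and (⊕_ω ℤ)^ω are pairwise non-isomorphic abelian groups. In particular, ℤ^ω is not isomorphic to (⊕_ω ℤ)^ω. -/
/-!
Specker's lemma: a homomorphism `f : ℤ^ω → ℤ` vanishes on all sequences supported beyond some
`N`. Hence `f` is determined by `f e₀, …, f e_{N-1}` and `Hom(ℤ^ω, ℤ)` is countable, whereas the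
other two groups surject onto `⊕_ω ℤ`, whose dual `ℤ^ω` is uncountable.

For the last pair, a Baire category argument on `ℤ^ω` upgrades Specker's lemma to homomorphisms
`ℤ^ω → ⊕_ω ℤ`: their image lies in a finite subsum. So an isomorphism
`(⊕_ω ℤ) × ℤ^ω ≅ (⊕_ω ℤ)^ω` maps `ℤ^ω` into `∏ₙ ℤ^{Jₙ}` with `Jₙ` finite, and reading off one
coordinate outside `Jₙ` in each factor yields a surjection from the countable `⊕_ω ℤ` onto `ℤ^ω`.
-/

open Finset Function

namespace BaerSpecker

instance : Uncountable (ℕ → ℤ) :=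
  uncountable_iff_forall_not_surjective.2 fun f hf => by
    obtain ⟨m, hm⟩ := hf fun n => f n n + 1
    simpa using congrFun hm m

def tail (N : ℕ) : AddSubgroup (ℕ → ℤ) where
  carrier := {x | ∀ n < N, x n = 0}
  add_mem' hx hy n hn := by simp [hx n hn, hy n hn]
  zero_mem' _ _ := rfl
  neg_mem' hx n hn := by simp [hx n hn]

theorem sub_sum_single_mem_tail (x : ℕ → ℤ) (N : ℕ) :
    x - ∑ n ∈ range N, x n • Pi.single n 1 ∈ tail N := by
  intro k hk
  simp [Finset.sum_apply, Pi.single_apply, hk]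

theorem map_eq_sum_of_tail_le_ker {A : Type*} [AddCommGroup A] (f : (ℕ → ℤ) →+ A) {N : ℕ}
    (hN : tail N ≤ f.ker) (x : ℕ → ℤ) :
    f x = ∑ n ∈ range N, x n • f (Pi.single n 1) := by
  have := hN (sub_sum_single_mem_tail x N)
  rw [AddMonoidHom.mem_ker, map_sub, sub_eq_zero, map_sum] at this
  simpa only [map_zsmul] using this

theorem dvd_map_of_forall_dvd (f : (ℕ → ℤ) →+ ℤ) {q : ℤ} {y : ℕ → ℤ} (hy : ∀ n, q ∣ y n) :
    q ∣ f y := by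
  have : y = q • fun n => y n / q := funext fun n => (Int.mul_ediv_cancel' (hy n)).symm
  rw [this, map_zsmul, smul_eq_mul]
  exact dvd_mul_right _ _

-- For `u m ∈ tail m`, the coordinatewise finite series `∑ m, a m • u m`.
def tailSum (a : ℕ → ℤ) (u : ℕ → ℕ → ℤ) : ℕ → ℤ := fun n => ∑ m ∈ range (n + 1), a m * u m n

section tailSum

variable {a : ℕ → ℤ} {u : ℕ → ℕ → ℤ}

theorem sum_range_eq_tailSum (hu : ∀ m, u m ∈ tail m) {n K : ℕ} (hK : n < K) :
    ∑ m ∈ range K, a m * u m n = tailSum a u n := by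
  refine (sum_subset (range_subset_range.2 hK) fun m hmK hmn => ?_).symm
  rw [hu m n (by simpa using hmn), mul_zero]

theorem dvd_map_tailSum_sub (f : (ℕ → ℤ) →+ ℤ) (hu : ∀ m, u m ∈ tail m) {M : ℕ}
    (ha : ∀ m, M ≤ m → a M ∣ a m) :
    a M ∣ f (tailSum a u) - ∑ m ∈ range M, a m * f (u m) := by
  have hsub : f (tailSum a u) - ∑ m ∈ range M, a m * f (u m) =
      f (tailSum a u - ∑ m ∈ range M, a m • u m) := by
    simp only [map_sub, map_sum, map_zsmul, smul_eq_mul]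
  rw [hsub]
  refine dvd_map_of_forall_dvd f fun n => ?_
  have hK : M ≤ max (n + 1) M := le_max_right _ _
  rw [Pi.sub_apply, ← sum_range_eq_tailSum hu (lt_max_of_lt_left n.lt_succ_self),
    ← sum_range_add_sum_Ico _ hK, Finset.sum_apply]
  simp only [Pi.smul_apply, smul_eq_mul, add_sub_cancel_left]
  exact dvd_sum fun m hm => (ha m (mem_Ico.1 hm).1).mul_right _

end tailSum

def growth (c : ℕ → ℤ) (m : ℕ) : ℤ := ∏ k ∈ range m, (∑ i ∈ range (k + 1), |c i| + k + 2)

section growth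

variable (c : ℕ → ℤ)

theorem growth_pos (m : ℕ) : 0 < growth c m :=
  prod_pos fun k _ => by positivity

theorem growth_dvd_growth {M m : ℕ} (h : M ≤ m) : growth c M ∣ growth c m :=
  prod_dvd_prod_of_subset _ _ _ (range_subset_range.2 h)

theorem abs_sum_growth_mul_add_lt (m : ℕ) :
    |∑ k ∈ range (m + 1), growth c k * c k| + m < growth c (m + 1) := by
  have hle : ∀ k ∈ range (m + 1), |growth c k * c k| ≤ growth c m * |c k| := fun k hk => by
    rw [abs_mul, abs_of_pos (growth_pos c k)]
    exact mul_le_mul_of_nonneg_right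
      (Int.le_of_dvd (growth_pos c m) (growth_dvd_growth c (mem_range_succ_iff.1 hk)))
      (abs_nonneg _)
  have h1 : 1 ≤ growth c m := growth_pos c m
  calc |∑ k ∈ range (m + 1), growth c k * c k| + m
      ≤ growth c m * ∑ k ∈ range (m + 1), |c k| + m := by
        gcongr
        exact (abs_sum_le_sum_abs _ _).trans ((sum_le_sum hle).trans_eq (mul_sum ..).symm)
    _ < growth c m * (∑ k ∈ range (m + 1), |c k| + m + 2) := by nlinarith
    _ = growth c (m + 1) := (prod_range_succ _ m).symm

end growth

theorem exists_tail_le_ker (f : (ℕ → ℤ) →+ ℤ) : ∃ N, tail N ≤ f.ker := by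
  -- With `d = ∑ a m • u m` for the divisibility chain `a = growth c`, `f d` is congruent to the
  -- partial sum `σ m` modulo `a (m + 1)`, which is eventually larger than `|f d - σ m|`; so `σ` is
  -- eventually constant, contradicting `f (u m) ≠ 0`.
  by_contra! h
  choose u hu hfu using fun N => SetLike.not_le_iff_exists.1 (h N)
  set c : ℕ → ℤ := fun m => f (u m)
  set σ : ℕ → ℤ := fun m => ∑ k ∈ range (m + 1), growth c k * c k
  set d := f (tailSum (growth c) u)
  have hσ : ∀ m, d.natAbs ≤ m → d = σ m := fun m hm => by
    have hdvd := dvd_map_tailSum_sub f hu (M := m + 1) fun k hk => growth_dvd_growth c hk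
    refine (sub_eq_zero.1 (Int.eq_zero_of_abs_lt_dvd hdvd ?_))
    have := abs_sum_growth_mul_add_lt c m
    have : |d| ≤ m := by rw [Int.abs_eq_natAbs]; exact_mod_cast hm
    calc |d - σ m| ≤ |d| + |σ m| := abs_sub _ _
      _ < _ := by linarith
  have hstep : σ (d.natAbs + 1) = σ d.natAbs :=
    (hσ _ (Nat.le_succ _)).symm.trans (hσ _ le_rfl)
  rw [show σ (d.natAbs + 1) = σ d.natAbs + growth c (d.natAbs + 1) * c (d.natAbs + 1) from
    sum_range_succ .., add_eq_left, mul_eq_zero] at hstep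
  exact hstep.elim (growth_pos c _).ne' (hfu _)

instance countable_addMonoidHom_int : Countable ((ℕ → ℤ) →+ ℤ) := by
  have hS : ∀ N, {f : (ℕ → ℤ) →+ ℤ | tail N ≤ f.ker}.Countable := fun N =>
    (Set.mapsTo_univ (fun f (n : Fin N) => f (Pi.single n 1)) _).countable_of_injOn
      (fun f hf g hg hfg => AddMonoidHom.ext fun x => by
        rw [map_eq_sum_of_tail_le_ker f hf, map_eq_sum_of_tail_le_ker g hg]
        exact sum_congr rfl fun n hn => congrArg _ (congrFun hfg ⟨n, mem_range.1 hn⟩))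
      Set.countable_univ
  rw [← Set.countable_univ_iff]
  exact (Set.countable_iUnion hS).mono fun f _ => Set.mem_iUnion.2 (exists_tail_le_ker f)

theorem uncountable_addMonoidHom_int_of_surjective {Y : Type*} [AddCommGroup Y]
    {p : Y →+ (ℕ →₀ ℤ)} (hp : Surjective p) : Uncountable (Y →+ ℤ) := by
  refine Injective.uncountable
    (f := fun c : ℕ → ℤ => (Finsupp.linearCombination ℤ c).toAddMonoidHom.comp p)
    fun c c' h => funext fun j => ?_
  obtain ⟨y, hy⟩ := hp (Finsupp.single j 1)
  simpa [hy] using DFunLike.congr_fun h y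

theorem isEmpty_addEquiv_of_surjective {Y : Type*} [AddCommGroup Y]
    {p : Y →+ (ℕ →₀ ℤ)} (hp : Surjective p) : IsEmpty ((ℕ → ℤ) ≃+ Y) := by
  refine ⟨fun Φ => ?_⟩
  have := uncountable_addMonoidHom_int_of_surjective hp
  refine not_injective_uncountable_countable (fun g : Y →+ ℤ => g.comp Φ.toAddMonoidHom)
    fun g g' h => AddMonoidHom.ext fun y => ?_
  simpa using DFunLike.congr_fun h (Φ.symm y)

theorem exists_tail_forall_ge_eq_zero (ρ : (ℕ → ℤ) →+ (ℕ →₀ ℤ)) :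
    ∃ N L, ∀ x ∈ tail N, ∀ j, L ≤ j → ρ x j = 0 := by
  set pair : (ℕ → ℤ) → (ℕ → ℤ) →+ ℤ :=
    fun c => (Finsupp.linearCombination ℤ c).toAddMonoidHom.comp ρ
  have hpair : ∀ c x, pair c x = ∑ j ∈ (ρ x).support, ρ x j * c j := fun c x => by
    simp [pair, Finsupp.linearCombination_apply, Finsupp.sum]
  set S : ℕ → Set (ℕ → ℤ) := fun N => {c | tail N ≤ (pair c).ker}
  have hclosed : ∀ N, IsClosed (S N) := fun N => by
    have : S N = ⋂ x ∈ tail N, {c | pair c x = 0} := by ext; simp [S, SetLike.le_def]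
    rw [this]
    refine isClosed_biInter fun x _ => isClosed_eq ?_ continuous_const
    simp_rw [hpair]
    fun_prop
  have hcover : ⋃ N, S N = Set.univ :=
    Set.eq_univ_of_forall fun c => Set.mem_iUnion.2 (exists_tail_le_ker (pair c))
  -- Baire: some `S N` has interior; being a subgroup it then contains every `c` vanishing on a
  -- finite set `I`, in particular `Pi.single j 1` for `j ∉ I`.
  obtain ⟨N, c₀, hc₀⟩ := nonempty_interior_of_iUnion_of_closed hclosed hcover
  obtain ⟨I, U, hU, hIU⟩ := isOpen_pi_iff.1 isOpen_interior c₀ hc₀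
  refine ⟨N, I.sup id + 1, fun x hx j hj => ?_⟩
  have hjI : j ∉ I := fun h => by have := le_sup (f := id) h; simp at this; omega
  have hmem : c₀ + Pi.single j 1 ∈ S N := interior_subset <| hIU fun i hi => by
    simpa [Pi.single_apply, show i ≠ j by rintro rfl; exact hjI hi] using (hU i hi).2
  have h₀ : pair c₀ x = 0 := interior_subset hc₀ hx
  have h₁ : pair (c₀ + Pi.single j 1) x = 0 := hmem hx
  rw [hpair] at h₀ h₁
  simpa [mul_add, sum_add_distrib, h₀, Pi.single_apply] using h₁

theorem exists_finset_support_subset (ρ : (ℕ → ℤ) →+ (ℕ →₀ ℤ)) :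
    ∃ J : Finset ℕ, ∀ x, (ρ x).support ⊆ J := by
  obtain ⟨N, L, hρ⟩ := exists_tail_forall_ge_eq_zero ρ
  refine ⟨range L ∪ (range N).biUnion fun n => (ρ (Pi.single n 1)).support, fun x j hj => ?_⟩
  by_contra hJ
  simp only [mem_union, mem_range, mem_biUnion, Finsupp.mem_support_iff, not_or, not_lt,
    not_exists, not_and, not_not] at hJ
  have hx : ρ x = ρ (x - ∑ n ∈ range N, x n • Pi.single n 1) +
      ∑ n ∈ range N, x n • ρ (Pi.single n 1) := by
    rw [map_sub, map_sum]
    simp only [map_zsmul, sub_add_cancel]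
  refine Finsupp.mem_support_iff.1 hj ?_
  rw [hx, Finsupp.add_apply, hρ _ (sub_sum_single_mem_tail x N) j hJ.1,
    Finsupp.finsetSum_apply, zero_add]
  exact sum_eq_zero fun n hn => by rw [Finsupp.smul_apply, hJ.2 n (mem_range.1 hn), smul_zero]

theorem uncountable_of_addEquiv_prod_pi {A : Type*} [AddCommGroup A]
    (Φ : A × (ℕ → ℤ) ≃+ (ℕ → (ℕ →₀ ℤ))) : Uncountable A := by
  choose J hJ using fun n => exists_finset_support_subset
    ((Pi.evalAddMonoidHom _ n).comp (Φ.toAddMonoidHom.comp (AddMonoidHom.inr A (ℕ → ℤ))))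
  choose k hk using fun n => Infinite.exists_notMem_finset (J n)
  refine Surjective.uncountable (f := fun a n => Φ (a, 0) n (k n)) fun t => ?_
  set y : ℕ → (ℕ →₀ ℤ) := fun n => Finsupp.single (k n) (t n)
  refine ⟨(Φ.symm y).1, funext fun n => ?_⟩
  have hsplit : ((Φ.symm y).1, (0 : ℕ → ℤ)) = Φ.symm y - (0, (Φ.symm y).2) := by ext <;> simp
  have hzero : Φ (0, (Φ.symm y).2) n (k n) = 0 :=
    Finsupp.notMem_support_iff.1 fun h => hk n (hJ n _ h)
  simp [hsplit, hzero, y]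

end BaerSpecker

open BaerSpecker

/-- ℤ^ω, (⊕_ω ℤ) ⊕ ℤ^ω, and (⊕_ω ℤ)^ω are pairwise non-isomorphic. -/
theorem three_groups_pairwise_nonisomorphic :
    IsEmpty ((ℕ → ℤ) ≃+ ((ℕ →₀ ℤ) × (ℕ → ℤ))) ∧
    IsEmpty ((ℕ → ℤ) ≃+ (ℕ → (ℕ →₀ ℤ))) ∧
    IsEmpty (((ℕ →₀ ℤ) × (ℕ → ℤ)) ≃+ (ℕ → (ℕ →₀ ℤ))) :=
  ⟨isEmpty_addEquiv_of_surjective (p := AddMonoidHom.fst _ _) Prod.fst_surjective,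
    isEmpty_addEquiv_of_surjective (p := Pi.evalAddMonoidHom _ 0) (surjective_eval 0),
    ⟨fun Φ => (uncountable_of_addEquiv_prod_pi Φ).not_countable inferInstance⟩⟩
end

section
/- The Baer–Specker group ℤ^ω is not a free abelian group. -/
open Function

/-- The Baer–Specker group ℤ^ω is not a free abelian group. -/
theorem specker_group_not_free :
    ¬ Module.Free ℤ (ℕ → ℤ) := by
  intro hfree
  classical
  obtain ⟨I, b⟩ := hfree.exists_basis
  -- the countable set of basis indices supporting the standard unit vectors
  set S : Set I := ⋃ n : ℕ, ((b.repr (Pi.single n 1)).support : Set I) with hS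
  have hScount : S.Countable := Set.countable_iUnion fun n => (Finset.countable_toSet _)
  -- for each a : ℕ → Bool consider the sequence x a = (a n * n!)ₙ
  set x : (ℕ → Bool) → (ℕ → ℤ) := fun a n => if a n then (n.factorial : ℤ) else 0 with hx
  -- key claim : the repr of x a is supported in S
  have key : ∀ (a : ℕ → Bool) (i : I), i ∉ S → b.repr (x a) i = 0 := by
    intro a i hi
    have hdvd : ∀ k : ℕ, ((k.factorial : ℤ)) ∣ b.repr (x a) i := by
      intro k
      -- split x a = truncation + k! • tail
      set t : ℕ → ℤ := fun n => if n < k then x a n else 0 with ht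
      set y : ℕ → ℤ := fun n => if n < k then 0 else (if a n then ((n.factorial / k.factorial : ℕ) : ℤ) else 0) with hy
      have hsplit : x a = t + (k.factorial : ℤ) • y := by
        funext n
        by_cases hn : n < k
        · simp [ht, hy, hn]
        · have hdv : k.factorial ∣ n.factorial :=
            Nat.factorial_dvd_factorial (le_of_not_gt hn)
          by_cases ha : a n
          · have hc : (n.factorial : ℤ) = (k.factorial : ℤ) * ((n.factorial / k.factorial : ℕ) : ℤ) := by
              rw [← Nat.cast_mul, Nat.mul_div_cancel' hdv]
            simp only [hx, ht, hy, if_neg hn, if_pos ha, Pi.add_apply, Pi.smul_apply,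
              smul_eq_mul, zero_add]
            exact hc
          · simp [hx, ht, hy, hn, ha]
      have htsum : t = ∑ n ∈ Finset.range k, (x a n) • Pi.single n (1 : ℤ) := by
        funext m
        by_cases hm : m < k
        · simp only [Finset.sum_apply, ht, if_pos hm]
          rw [Finset.sum_eq_single m]
          · simp
          · intro n _ hnm
            simp [Pi.single_apply, hnm]
          · intro h; exact absurd (Finset.mem_range.2 hm) h
        · simp only [Finset.sum_apply, ht, if_neg hm]
          rw [Finset.sum_eq_zero]
          intro n hn
          have : n ≠ m := by
            intro h; exact hm (h ▸ Finset.mem_range.1 hn)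
          simp [Pi.single_apply, this]
      have hti : b.repr t i = 0 := by
        rw [htsum]
        simp only [map_sum, map_smul, Finsupp.finset_sum_apply]
        apply Finset.sum_eq_zero
        intro n _
        have : i ∉ ((b.repr (Pi.single n 1)).support : Set I) := by
          intro h; exact hi (Set.mem_iUnion.2 ⟨n, h⟩)
        have : b.repr (Pi.single n (1 : ℤ)) i = 0 := by
          simpa [Finsupp.mem_support_iff] using this
        simp [Finsupp.smul_apply, this]
      have : b.repr (x a) i = (k.factorial : ℤ) * b.repr y i := by
        rw [hsplit, map_add, map_smul]
        simp [hti]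
      exact ⟨b.repr y i, this⟩
    -- an integer divisible by every factorial is zero
    set m : ℤ := b.repr (x a) i with hm
    by_contra hne
    have hk : |m| < ((m.natAbs + 1).factorial : ℤ) := by
      rw [Int.abs_eq_natAbs]
      exact_mod_cast Nat.lt_of_lt_of_le (Nat.lt_succ_self _) (Nat.self_le_factorial _)
    exact hne (Int.eq_zero_of_abs_lt_dvd (hdvd (m.natAbs + 1)) hk)
  -- build an injection from (ℕ → Bool) into a countable type
  have hScnt : Countable S := hScount.to_subtype
  set g : (ℕ → Bool) → (S →₀ ℤ) := fun a => Finsupp.subtypeDomain (· ∈ S) (b.repr (x a)) with hg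
  have hginj : Function.Injective g := by
    intro a a' h
    have hrepr : b.repr (x a) = b.repr (x a') := by
      ext i
      by_cases hi : i ∈ S
      · have := DFunLike.congr_fun h (⟨i, hi⟩ : S)
        simpa [hg, Finsupp.subtypeDomain_apply] using this
      · rw [key a i hi, key a' i hi]
    have hxx : x a = x a' := b.repr.injective hrepr
    funext n
    have h := congrFun hxx n
    simp only [hx] at h
    have hfac : ((n.factorial : ℤ)) ≠ 0 := Nat.cast_ne_zero.2 n.factorial_ne_zero
    by_cases h1 : a n <;> by_cases h2 : a' n
    · rw [h1, h2]
    · rw [if_pos h1, if_neg h2] at h; exact absurd h hfac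
    · rw [if_neg h1, if_pos h2] at h; exact absurd h.symm hfac
    · rw [Bool.not_eq_true] at h1 h2; rw [h1, h2]
  -- (ℕ → Bool) is uncountable : contradiction
  have hcnt : Countable (ℕ → Bool) := hginj.countable
  have hSetcnt : Countable (Set ℕ) := by
    have e : Set ℕ ≃ (ℕ → Bool) :=
      Equiv.arrowCongr (Equiv.refl ℕ) Equiv.propEquivBool
    exact Countable.of_equiv _ e.symm
  obtain ⟨f, hf⟩ := Countable.exists_injective_nat (Set ℕ)
  exact Function.cantor_injective f hf
end

section
/- If G = lim← ∗_{i=0}^n ℤ (inverse limit of free products of n+1 copies of ℤ along the canonical projection bonding maps), then the abelianization functor composed with the quotient by R_ℤ applied to G yields ℤ^ω; i.e., F(G₁) ≅ ℤ^ω where F(G) = Ab(G)/R_ℤ(Ab(G)). -/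
/-!
The exponent sums of a generator agree at all levels where it lives, which gives a homomorphism
`expSums : G₁ → ℤ^ℕ`; it is onto because nested infinite products converge in `G₁`.

The key fact is that every `H : G₁ → ℤ` kills the kernel of some projection `G₁ → F_N`.
Otherwise choose `g k` in the kernel of the `k`-th projection with `H (g k) ≠ 0`, and form the
nested products `t k = g k * t (k + 1) ^ d k`. The integers `m k = H (t k)` then satisfy
`m k = H (g k) + d k * m (k + 1)`, which has no integer solution when the `d k` grow fast
enough: `m 0` would have to equal two different partial sums of a mixed-radix expansion.

Since `G₁ → F_N` has a homomorphic section and `F_N` is free of finite rank, such an `H` is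
a combination of the exponent sums at level `N`, so it kills `ker expSums`. Hence
`R_ℤ(Ab G₁) = ker (Ab expSums)` and `Ab G₁ / R_ℤ(Ab G₁) ≅ ℤ^ℕ`.
-/

/-- The bonding map ∗_{i=0}^{n+1} ℤ → ∗_{i=0}^n ℤ killing the last free factor,
realized on free groups (the free product of k copies of ℤ is the free group of rank k). -/
def bonding (n : ℕ) : FreeGroup (Fin (n + 2)) →* FreeGroup (Fin (n + 1)) :=
  FreeGroup.lift (fun i => if h : (i : ℕ) < n + 1 then FreeGroup.of ⟨i, h⟩ else 1)

/-- G₁, the inverse limit of the free products ∗_{i=0}^n ℤ along the projections. -/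
def G1 : Subgroup (∀ n, FreeGroup (Fin (n + 1))) where
  carrier := {f | ∀ n, bonding n (f (n + 1)) = f n}
  one_mem' := by intro n; simp
  mul_mem' := by intro a b ha hb n; simp [map_mul, ha n, hb n]
  inv_mem' := by intro a ha n; simp [map_inv, ha n]

section AffineRecurrence

/-- Partial sums `S k` and place values `D k` of a mixed-radix expansion with digits `b`, the
bases being chosen so that `D k` outgrows `2 * |S k|`. -/
def mixedRadix (b : ℕ → ℤ) : ℕ → ℤ × ℤ
  | 0 => (0, 1)
  | k + 1 =>
    let s := (mixedRadix b k).1 + (mixedRadix b k).2 * b k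
    (s, (mixedRadix b k).2 * (2 * |s| + 2))

def mixedRadixBase (b : ℕ → ℤ) (k : ℕ) : ℤ := 2 * |(mixedRadix b (k + 1)).1| + 2

variable (b : ℕ → ℤ)

lemma mixedRadix_succ_fst (k : ℕ) :
    (mixedRadix b (k + 1)).1 = (mixedRadix b k).1 + (mixedRadix b k).2 * b k :=
  rfl

lemma mixedRadix_succ_snd (k : ℕ) :
    (mixedRadix b (k + 1)).2 = (mixedRadix b k).2 * mixedRadixBase b k :=
  rfl

lemma le_mixedRadix_snd (k : ℕ) : (k : ℤ) + 1 ≤ (mixedRadix b k).2 := by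
  induction k with
  | zero => simp [mixedRadix]
  | succ k ih =>
    rw [mixedRadix_succ_snd, mixedRadixBase]
    have := abs_nonneg (mixedRadix b (k + 1)).1
    push_cast
    nlinarith

lemma two_mul_abs_mixedRadix_fst_lt (k : ℕ) : 2 * |(mixedRadix b k).1| < (mixedRadix b k).2 := by
  cases k with
  | zero => simp [mixedRadix]
  | succ k =>
    rw [mixedRadix_succ_snd, mixedRadixBase]
    have := le_mixedRadix_snd b k
    have := abs_nonneg (mixedRadix b (k + 1)).1
    nlinarith

lemma eq_mixedRadix_add_mul {m : ℕ → ℤ} (hm : ∀ k, m k = b k + mixedRadixBase b k * m (k + 1))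
    (k : ℕ) : m 0 = (mixedRadix b k).1 + (mixedRadix b k).2 * m k := by
  induction k with
  | zero => simp [mixedRadix]
  | succ k ih => rw [ih, hm k, mixedRadix_succ_fst, mixedRadix_succ_snd]; ring

lemma eq_mixedRadix_fst {m : ℕ → ℤ} (hm : ∀ k, m k = b k + mixedRadixBase b k * m (k + 1))
    {k : ℕ} (hk : 2 * |m 0| < (mixedRadix b k).2) : m 0 = (mixedRadix b k).1 := by
  have hdvd : (mixedRadix b k).2 ∣ m 0 - (mixedRadix b k).1 :=
    ⟨m k, by rw [eq_mixedRadix_add_mul b hm k]; ring⟩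
  have hlt : |m 0 - (mixedRadix b k).1| < (mixedRadix b k).2 := by
    linarith [abs_sub (m 0) (mixedRadix b k).1, two_mul_abs_mixedRadix_fst_lt b k]
  linarith [Int.eq_zero_of_abs_lt_dvd hdvd hlt]

theorem exists_unsolvable_affine_recurrence (hb : ∀ k, b k ≠ 0) :
    ∃ d : ℕ → ℤ, ∀ m : ℕ → ℤ, ¬ ∀ k, m k = b k + d k * m (k + 1) := by
  refine ⟨mixedRadixBase b, fun m hm => ?_⟩
  set K := 2 * (m 0).natAbs
  have hK : ∀ j, 2 * |m 0| < (mixedRadix b (K + j)).2 := fun j => by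
    have := le_mixedRadix_snd b (K + j)
    push_cast at this
    rw [Int.abs_eq_natAbs]
    omega
  have h₁ := eq_mixedRadix_fst b hm (hK 0)
  rw [eq_mixedRadix_fst b hm (hK 1), add_zero, mixedRadix_succ_fst, add_eq_left] at h₁
  exact mul_ne_zero (by linarith [le_mixedRadix_snd b K]) (hb K) h₁

end AffineRecurrence

namespace FreeGroup

variable {α : Type*} [DecidableEq α]

def expSum (a : α) : FreeGroup α →* Multiplicative ℤ :=
  lift (Pi.mulSingle a (Multiplicative.ofAdd 1))

@[simp]
lemma expSum_of (a b : α) :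
    expSum a (of b) = (Pi.mulSingle a (Multiplicative.ofAdd 1) : α → Multiplicative ℤ) b :=
  lift_apply_of

lemma hom_eq_prod_zpowersHom_comp_expSum [Fintype α] {M : Type*} [CommGroup M]
    (ψ : FreeGroup α →* M) : ψ = ∏ a, (zpowersHom M (ψ (of a))).comp (expSum a) := by
  refine ext_hom _ _ fun b => ?_
  rw [MonoidHom.finsetProd_apply, Finset.prod_eq_single b]
  · simp
  · intro a _ hab
    simp [Ne.symm hab]
  · simp

lemma map_eq_one_of_forall_expSum_eq_one [Fintype α] {M : Type*} [CommGroup M]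
    (ψ : FreeGroup α →* M) {x : FreeGroup α} (hx : ∀ a, expSum a x = 1) : ψ x = 1 := by
  rw [hom_eq_prod_zpowersHom_comp_expSum ψ, MonoidHom.finsetProd_apply]
  exact Finset.prod_eq_one fun a _ => by simp [hx a]

end FreeGroup

open FreeGroup (of lift lift_apply_of ext_hom expSum expSum_of)

lemma MonoidHom.iInf_ker_eq_ker {A M ι : Type*} [Group A] [Group M] (Φ : A →* (ι → M))
    (h : ∀ ψ : A →* M, Φ.ker ≤ ψ.ker) : ⨅ ψ : A →* M, ψ.ker = Φ.ker :=
  le_antisymm (fun _ hx => funext fun i => Subgroup.mem_iInf.1 hx ((Pi.evalMonoidHom _ i).comp Φ))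
    (le_iInf h)

namespace G1

def proj (n : ℕ) : G1 →* FreeGroup (Fin (n + 1)) :=
  (Pi.evalMonoidHom (fun n => FreeGroup (Fin (n + 1))) n).comp G1.subtype

lemma bonding_proj (g : G1) (n : ℕ) : bonding n (proj (n + 1) g) = proj n g :=
  g.2 n

lemma antitone_ker_proj : Antitone fun n => (proj n).ker :=
  antitone_nat_of_succ_le fun n g hg => by
    rw [MonoidHom.mem_ker, ← bonding_proj, MonoidHom.mem_ker.1 hg, map_one]

lemma bonding_of (n : ℕ) (i : Fin (n + 2)) :
    bonding n (of i) = if h : (i : ℕ) < n + 1 then of ⟨i, h⟩ else 1 :=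
  lift_apply_of

def truncate (n : ℕ) : FreeGroup ℕ →* FreeGroup (Fin (n + 1)) :=
  lift fun i => if h : i < n + 1 then of ⟨i, h⟩ else 1

lemma bonding_truncate (n : ℕ) : (bonding n).comp (truncate (n + 1)) = truncate n := by
  refine ext_hom _ _ fun i => ?_
  simp only [MonoidHom.comp_apply, truncate, lift_apply_of]
  by_cases h : i < n + 1
  · rw [dif_pos (by omega), dif_pos h, bonding_of, dif_pos h]
  · rw [dif_neg h]
    split_ifs
    · rw [bonding_of, dif_neg h]
    · exact map_one _

lemma truncate_map_val (n : ℕ) (x : FreeGroup (Fin (n + 1))) :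
    truncate n (FreeGroup.map Fin.val x) = x := by
  suffices (truncate n).comp (FreeGroup.map Fin.val) = MonoidHom.id _ from
    DFunLike.congr_fun this x
  refine ext_hom _ _ fun i => ?_
  simp [truncate, Fin.is_le]

lemma expSum_truncate {n : ℕ} (i : Fin (n + 1)) (x : FreeGroup ℕ) :
    expSum i (truncate n x) = expSum (i : ℕ) x := by
  suffices (expSum i).comp (truncate n) = expSum (i : ℕ) from DFunLike.congr_fun this x
  refine ext_hom _ _ fun j => ?_
  simp only [MonoidHom.comp_apply, truncate, lift_apply_of]
  split_ifs with h
  · simp [Pi.mulSingle_apply, Fin.ext_iff]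
  · simp [Pi.mulSingle_apply]
    omega

def ofFreeGroup : FreeGroup ℕ →* G1 :=
  MonoidHom.codRestrict (MonoidHom.pi truncate) G1 fun x n =>
    DFunLike.congr_fun (bonding_truncate n) x

@[simp]
lemma proj_ofFreeGroup (n : ℕ) (x : FreeGroup ℕ) : proj n (ofFreeGroup x) = truncate n x :=
  rfl

def expSums : G1 →* (ℕ → Multiplicative ℤ) :=
  MonoidHom.pi fun j => (expSum (Fin.last j)).comp (proj j)

lemma expSums_apply (g : G1) (j : ℕ) : expSums g j = expSum (Fin.last j) (proj j g) :=
  rfl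

lemma expSums_ofFreeGroup (x : FreeGroup ℕ) (j : ℕ) : expSums (ofFreeGroup x) j = expSum j x :=
  expSum_truncate (Fin.last j) x

lemma expSum_bonding {n : ℕ} (i : Fin (n + 1)) (x : FreeGroup (Fin (n + 2))) :
    expSum i (bonding n x) = expSum i.castSucc x := by
  suffices (expSum i).comp (bonding n) = expSum i.castSucc from DFunLike.congr_fun this x
  refine ext_hom _ _ fun j => ?_
  rw [MonoidHom.comp_apply, bonding_of]
  split_ifs with h
  · simp [Pi.mulSingle_apply, Fin.ext_iff]
  · simp [Pi.mulSingle_apply, Fin.ext_iff]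
    omega

lemma expSum_proj (g : G1) {j n : ℕ} (hjn : j ≤ n) :
    expSum ⟨j, Nat.lt_succ_of_le hjn⟩ (proj n g) = expSums g j := by
  induction n, hjn using Nat.le_induction with
  | base => rfl
  | succ n hjn ih => rw [← ih, ← bonding_proj g n, expSum_bonding]; rfl

section NestedProduct

variable {g : ℕ → G1} {d : ℕ → ℤ}

/-- Level `n` of the infinite nested product `g k * (g (k + 1) * (⋯) ^ d (k + 1)) ^ d k`;
it is finite when `g i` vanishes below level `i`. -/
def nestedProdLevel (g : ℕ → G1) (d : ℕ → ℤ) (k n : ℕ) : FreeGroup (Fin (n + 1)) :=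
  if n < k then 1 else proj n (g k) * nestedProdLevel g d (k + 1) n ^ d k
termination_by n + 1 - k

lemma nestedProdLevel_of_lt {k n : ℕ} (h : n < k) : nestedProdLevel g d k n = 1 := by
  rw [nestedProdLevel, if_pos h]

lemma nestedProdLevel_eq (hg : ∀ k n, n < k → proj n (g k) = 1) (k n : ℕ) :
    nestedProdLevel g d k n = proj n (g k) * nestedProdLevel g d (k + 1) n ^ d k := by
  by_cases h : n < k
  · rw [nestedProdLevel_of_lt h, nestedProdLevel_of_lt (by omega), hg k n h, one_zpow, mul_one]
  · rw [nestedProdLevel, if_neg h]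

lemma bonding_nestedProdLevel (hg : ∀ k n, n < k → proj n (g k) = 1) (k n : ℕ) :
    bonding n (nestedProdLevel g d k (n + 1)) = nestedProdLevel g d k n := by
  by_cases h : n + 1 < k
  · rw [nestedProdLevel_of_lt h, nestedProdLevel_of_lt (by omega), map_one]
  · rw [nestedProdLevel_eq hg k (n + 1), nestedProdLevel_eq hg k n, map_mul, map_zpow,
      bonding_proj, bonding_nestedProdLevel hg (k + 1) n]
termination_by n + 2 - k

lemma exists_seq_eq_mul_zpow_succ (hg : ∀ k n, n < k → proj n (g k) = 1) :
    ∃ t : ℕ → G1, (∀ k, t k = g k * t (k + 1) ^ d k) ∧ ∀ k n, n < k → proj n (t k) = 1 :=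
  ⟨fun k => ⟨fun n => nestedProdLevel g d k n, bonding_nestedProdLevel hg k⟩,
    fun k => Subtype.ext <| funext fun n => nestedProdLevel_eq hg k n,
    fun _ _ h => nestedProdLevel_of_lt h⟩

end NestedProduct

lemma expSums_apply_eq_one_of_proj_eq_one {g : G1} {j : ℕ} (h : proj j g = 1) :
    expSums g j = 1 := by
  rw [expSums_apply, h, map_one]

lemma expSums_surjective : Function.Surjective expSums := by
  intro a
  obtain ⟨t, ht, ht_lt⟩ := exists_seq_eq_mul_zpow_succ (d := fun _ => 1)
    (g := fun k => ofFreeGroup (of k) ^ Multiplicative.toAdd (a k)) fun k n h => by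
      simp [truncate, show ¬k ≤ n by omega]
  refine ⟨t 0, funext fun j => ?_⟩
  have key : ∀ k ≤ j, expSums (t k) j = a j := by
    intro k hk
    induction hk using Nat.decreasingInduction with
    | self =>
      rw [ht j, zpow_one, map_mul, Pi.mul_apply,
        expSums_apply_eq_one_of_proj_eq_one (ht_lt _ _ j.lt_succ_self)]
      simp [expSums_ofFreeGroup, ← Int.ofAdd_mul]
    | of_succ k hk ih =>
      rw [ht k, zpow_one, map_mul, Pi.mul_apply, ← ih]
      simp [expSums_ofFreeGroup, hk.ne']
  exact key 0 j.zero_le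

lemma exists_ker_proj_le_ker (H : G1 →* Multiplicative ℤ) : ∃ N, (proj N).ker ≤ H.ker := by
  by_contra! hH
  simp only [SetLike.not_le_iff_exists] at hH
  choose g hg_ker hg_H using hH
  obtain ⟨d, hd⟩ := exists_unsolvable_affine_recurrence (fun k => Multiplicative.toAdd (H (g k)))
    fun k => by simpa using hg_H k
  obtain ⟨t, ht, -⟩ := exists_seq_eq_mul_zpow_succ (d := d)
    fun k n h => antitone_ker_proj h.le (hg_ker k)
  exact hd (fun k => Multiplicative.toAdd (H (t k))) fun k => by
    rw [ht k]
    simp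

lemma ker_expSums_le_ker (H : G1 →* Multiplicative ℤ) : expSums.ker ≤ H.ker := by
  intro g hg
  obtain ⟨N, hN⟩ := exists_ker_proj_le_ker H
  set w := ofFreeGroup (FreeGroup.map Fin.val (proj N g))
  have hw : proj N w = proj N g := truncate_map_val N _
  have hHw : H w = 1 :=
    FreeGroup.map_eq_one_of_forall_expSum_eq_one (H.comp (ofFreeGroup.comp (FreeGroup.map _)))
      fun i => (expSum_proj g i.is_le).trans (congrFun hg i)
  have hrest : w⁻¹ * g ∈ (proj N).ker := by simp [hw]
  rw [MonoidHom.mem_ker, ← mul_inv_cancel_left w g, map_mul, hHw, one_mul]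
  exact hN hrest

end G1

/-- F(G₁) ≅ ℤ^ω, where F(G) = Ab(G)/R_ℤ(Ab(G)). -/
theorem F_of_G1_iso_ZN :
    Nonempty ((Abelianization G1 ⧸
        (⨅ h : Abelianization G1 →* Multiplicative ℤ, h.ker)) ≃*
      Multiplicative (ℕ → ℤ)) := by
  set Φ := Abelianization.lift G1.expSums
  have hΦ : Function.Surjective Φ := fun a =>
    let ⟨g, hg⟩ := G1.expSums_surjective a
    ⟨Abelianization.of g, hg⟩
  have hker : ⨅ h : Abelianization G1 →* Multiplicative ℤ, h.ker = Φ.ker :=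
    Φ.iInf_ker_eq_ker fun ψ x hx => by
      induction x using QuotientGroup.induction_on
      exact G1.ker_expSums_le_ker (ψ.comp Abelianization.of) hx
  exact ⟨(QuotientGroup.quotientMulEquivOfEq hker).trans
    ((QuotientGroup.quotientKerEquivOfSurjective Φ hΦ).trans (MulEquiv.piMultiplicative _).symm)⟩
end

section
/- Let h : ∏_{i∈I} ℤ → ⊕_{j∈J} ℤ be a homomorphism of abelian groups, where each copy of ℤ is the integers. Then there exist a finite subset F ⊆ I and a finite subset G ⊆ J and a positive integer n such that h(n · ∏_{i∈I∖F} ℤ) ⊆ ⊕_{j∈G} ℤ. -/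
open Finset

private lemma dvd_hom {A : Type} (f : (A → ℤ) →+ ℤ) (N : ℤ) (y : A → ℤ)
    (h : ∀ a, N ∣ y a) : N ∣ f y := by
  have hy : y = N • (fun a => y a / N) := by
    funext a
    simp only [Pi.smul_apply, smul_eq_mul]
    exact (Int.mul_ediv_cancel' (h a)).symm
  rw [hy, map_zsmul, smul_eq_mul]
  exact dvd_mul_right _ _

private lemma kills_fin {f : (ℕ → ℤ) →+ ℤ} (h1 : ∀ n, f (Pi.single n (1:ℤ)) = 0) :
    ∀ (N : ℕ) (x : ℕ → ℤ), (∀ n, N ≤ n → x n = 0) → f x = 0 := by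
  intro N
  induction N with
  | zero =>
    intro x hx
    have : x = 0 := funext fun n => hx n (Nat.zero_le n)
    rw [this, map_zero]
  | succ N ih =>
    intro x hx
    have hdec : x = (fun m => if m = N then 0 else x m) + (x N) • Pi.single N (1:ℤ) := by
      funext m
      by_cases hm : m = N
      · subst hm; simp [Pi.single_apply]
      · simp [hm, Pi.single_apply]
    rw [hdec, map_add, ih _ (fun n hn => by
      by_cases hn' : n = N
      · simp [hn']
      · simp only [if_neg hn']
        exact hx n (lt_of_le_of_ne hn (Ne.symm hn'))), map_zsmul, h1, smul_zero, zero_add]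

private lemma spec_S2 (f : (ℕ → ℤ) →+ ℤ)
    (h0 : ∀ (N : ℕ) (x : ℕ → ℤ), (∀ n, N ≤ n → x n = 0) → f x = 0) (x : ℕ → ℤ) :
    f x = 0 := by
  by_contra hs
  have key : ∀ q : ℤ, 2 ≤ q → (q - 1) ∣ f x := by
    intro q hq
    set z : ℕ → ℤ := fun m => (∑ n ∈ range (m+1), q^n) * x m with hz
    set xt : ℕ → ℕ → ℤ := fun n => fun m => if n ≤ m then x m else 0 with hxt
    have hxteq : ∀ n, f (xt n) = f x := by
      intro n
      have : x - xt n = fun m => if n ≤ m then 0 else x m := by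
        funext m
        by_cases hm : n ≤ m <;> simp [hxt, hm]
      have h2 : f (x - xt n) = 0 := by
        rw [this]
        exact h0 n _ (fun m hm => by simp [hm])
      have := f.map_sub x (xt n)
      rw [this] at h2; linarith
    have hdiv : ∀ N : ℕ, (q^(N+1)) ∣ (f z - (∑ n ∈ range (N+1), q^n) * f x) := by
      intro N
      have hw : ∀ m, q^(N+1) ∣ (z - ∑ n ∈ range (N+1), q^n • xt n) m := by
        intro m
        have hsum : (∑ n ∈ range (N+1), q^n • xt n) m
            = (∑ n ∈ range (min (N+1) (m+1)), q^n) * x m := by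
          rw [Finset.sum_apply]
          have : ∀ n, (q^n • xt n) m = if n ≤ m then q^n * x m else 0 := by
            intro n
            simp only [Pi.smul_apply, hxt, smul_eq_mul, mul_ite, mul_zero]
          rw [Finset.sum_congr rfl (fun n _ => this n)]
          rw [Finset.sum_ite, Finset.sum_const_zero, add_zero, ← Finset.sum_mul]
          congr 1
          apply Finset.sum_congr _ (fun _ _ => rfl)
          ext n
          simp only [Finset.mem_filter, Finset.mem_range, Nat.lt_min]
          omega
        simp only [Pi.sub_apply, hsum, hz]
        rcases le_or_gt (m+1) (N+1) with hm | hm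
        · rw [min_eq_right hm]
          simp
        · rw [min_eq_left (le_of_lt hm)]
          rw [← sub_mul]
          apply Dvd.dvd.mul_right
          rw [← Finset.sum_Ico_eq_sub _ (le_of_lt hm)]
          apply Finset.dvd_sum
          intro n hn
          exact pow_dvd_pow q (Finset.mem_Ico.mp hn).1
      have := dvd_hom f (q^(N+1)) _ hw
      rw [map_sub, map_sum] at this
      have heq : ∀ n ∈ range (N+1), f (q^n • xt n) = q^n * f x := by
        intro n _
        rw [map_zsmul, smul_eq_mul, hxteq]
      rw [Finset.sum_congr rfl heq, ← Finset.sum_mul] at this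
      exact this
    -- A := (q-1) * f z + f x
    have hA : ∀ N : ℕ, (q^(N+1)) ∣ ((q-1) * f z + f x) := by
      intro N
      obtain ⟨D, hD⟩ := hdiv N
      have hgeom : (∑ n ∈ range (N+1), q^n) * (q - 1) = q^(N+1) - 1 := geom_sum_mul q (N+1)
      have heq2 : (q-1) * f z + f x
          = (q-1) * (q^(N+1) * D) + q^(N+1) * f x := by
        have hfz : f z = (∑ n ∈ range (N+1), q^n) * f x + q^(N+1) * D := by linarith [hD]
        rw [hfz]
        linear_combination hgeom * f x
      rw [heq2]
      exact dvd_add (Dvd.dvd.mul_left (dvd_mul_right _ D) _) (dvd_mul_right _ _)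
    -- conclude A = 0
    have hAzero : (q-1) * f z + f x = 0 := by
      set A := (q-1) * f z + f x with hAdef
      obtain ⟨N, hN⟩ : ∃ N : ℕ, |A| < 2^(N+1) := by
        obtain ⟨N, hN⟩ := pow_unbounded_of_one_lt (|A|) (by norm_num : (1:ℤ) < 2)
        exact ⟨N, lt_trans hN (by
          apply pow_lt_pow_right₀ (by norm_num : (1:ℤ) < 2) (Nat.lt_succ_self N))⟩
      refine Int.eq_zero_of_abs_lt_dvd (hA N) (lt_of_lt_of_le hN ?_)
      apply pow_le_pow_left₀ (by norm_num) hq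
    refine ⟨-(f z), by linarith⟩
  have h2 := key (|f x| + 2) (by linarith [abs_nonneg (f x)])
  have : (|f x| + 2 - 1) = |f x| + 1 := by ring
  rw [this] at h2
  have := Int.eq_zero_of_abs_lt_dvd h2 (by linarith [abs_nonneg (f x)])
  exact hs this

private noncomputable def snS (d : ℕ → ℤ) : ℕ → ℤ × ℤ
  | 0 => (0, 1)
  | (K+1) =>
    let p := snS d K
    let b : ℤ := if (p.2 * (2 * |d K| + 1)) ∣
        ((((Denumerable.eqv ℤ).symm K : ℤ)) - (p.1 + p.2 * d K)) then 2 else 1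
    (p.1 + b * p.2 * d K, p.2 * (2 * |d K| + 1))

private noncomputable def aS (d : ℕ → ℤ) (K : ℕ) : ℤ :=
  (if ((snS d K).2 * (2 * |d K| + 1)) ∣
      ((((Denumerable.eqv ℤ).symm K : ℤ)) - ((snS d K).1 + (snS d K).2 * d K)) then (2:ℤ) else 1)
    * (snS d K).2

private lemma snS_succ_2 (d : ℕ → ℤ) (K : ℕ) :
    (snS d (K+1)).2 = (snS d K).2 * (2 * |d K| + 1) := rfl

private lemma snS_succ_1 (d : ℕ → ℤ) (K : ℕ) :
    (snS d (K+1)).1 = (snS d K).1 + aS d K * d K := rfl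

private lemma snS_pos (d : ℕ → ℤ) (K : ℕ) : 0 < (snS d K).2 := by
  induction K with
  | zero => norm_num [snS]
  | succ K ih =>
    rw [snS_succ_2]
    have : (0:ℤ) < 2 * |d K| + 1 := by positivity
    positivity

private lemma snS_dvd (d : ℕ → ℤ) {K L : ℕ} (h : K ≤ L) : (snS d K).2 ∣ (snS d L).2 := by
  induction L, h using Nat.le_induction with
  | base => exact dvd_rfl
  | succ L hKL ih => rw [snS_succ_2]; exact ih.mul_right _

private lemma snS_dvd_a (d : ℕ → ℤ) (K : ℕ) : (snS d K).2 ∣ aS d K :=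
  dvd_mul_left _ _

private lemma snS_key (d : ℕ → ℤ) (K : ℕ) (hd : d K ≠ 0) :
    ¬ ((snS d (K+1)).2 ∣ (((Denumerable.eqv ℤ).symm K : ℤ) - (snS d (K+1)).1)) := by
  have hN := snS_pos d K
  set p := snS d K with hp
  set v : ℤ := ((Denumerable.eqv ℤ).symm K : ℤ) with hv
  rw [snS_succ_1, snS_succ_2, aS]
  by_cases hb : (p.2 * (2 * |d K| + 1)) ∣ (v - (p.1 + p.2 * d K))
  · rw [if_pos hb]
    intro hcon
    have h2 : p.2 * (2 * |d K| + 1) ∣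
        ((v - (p.1 + p.2 * d K)) - (v - (p.1 + 2 * p.2 * d K))) := by
      exact dvd_sub hb hcon
    have h3 : (v - (p.1 + p.2 * d K)) - (v - (p.1 + 2 * p.2 * d K)) = p.2 * d K := by ring
    rw [h3] at h2
    have h4 : p.2 * d K = 0 := by
      refine Int.eq_zero_of_abs_lt_dvd h2 ?_
      rw [abs_mul, abs_of_pos hN]
      have h5 : 0 < |d K| := abs_pos.mpr hd
      nlinarith
    rcases mul_eq_zero.mp h4 with h | h
    · omega
    · exact hd h
  · rw [if_neg hb]
    intro hcon
    exact hb (by convert hcon using 2; ring)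

private noncomputable def mseq (S : Set ℕ) (h : S.Infinite) : ℕ → ℕ
  | 0 => (h.exists_gt 0).choose
  | (k+1) => (h.exists_gt (mseq S h k)).choose

private lemma mseq_mem (S : Set ℕ) (h : S.Infinite) : ∀ k, mseq S h k ∈ S := by
  intro k
  cases k with
  | zero => exact (h.exists_gt 0).choose_spec.1
  | succ k => exact (h.exists_gt (mseq S h k)).choose_spec.1

private lemma mseq_mono (S : Set ℕ) (h : S.Infinite) : StrictMono (mseq S h) := by
  apply strictMono_nat_of_lt_succ
  intro k
  exact (h.exists_gt (mseq S h k)).choose_spec.2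

private lemma spec_S1 (f : (ℕ → ℤ) →+ ℤ)
    (hdvdf : ∀ (N : ℤ) (y : ℕ → ℤ), (∀ a, N ∣ y a) → N ∣ f y) :
    {n : ℕ | f (Pi.single n (1:ℤ)) ≠ 0}.Finite := by
  by_contra hinf0
  have hinf : Set.Infinite {n : ℕ | f (Pi.single n (1:ℤ)) ≠ 0} := hinf0
  -- strictly increasing sequence inside the set
  set nseq : ℕ → ℕ := mseq _ hinf with hnseq
  have hmem : ∀ k, nseq k ∈ {n : ℕ | f (Pi.single n (1:ℤ)) ≠ 0} := mseq_mem _ hinf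
  have hmono : StrictMono nseq := mseq_mono _ hinf
  set d : ℕ → ℤ := fun k => f (Pi.single (nseq k) (1:ℤ)) with hd
  have hdne : ∀ k, d k ≠ 0 := fun k => hmem k
  -- the element x
  set x : ℕ → ℤ := fun m => ∑ k ∈ range (m+1), (if nseq k = m then aS d k else 0) with hx
  have hxval : ∀ l, x (nseq l) = aS d l := by
    intro l
    show ∑ k ∈ range (nseq l + 1), (if nseq k = nseq l then aS d k else 0) = aS d l
    rw [Finset.sum_eq_single l]
    · rw [if_pos rfl]
    · intro b _ hbl
      rw [if_neg (fun hc => hbl (hmono.injective hc))]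
    · intro hl
      exact absurd (Finset.mem_range.mpr (Nat.lt_succ_of_le (hmono.le_apply))) hl
  have hxzero : ∀ m, (∀ k, nseq k ≠ m) → x m = 0 := by
    intro m hm
    show ∑ k ∈ range (m + 1), (if nseq k = m then aS d k else 0) = 0
    exact Finset.sum_eq_zero (fun k _ => if_neg (hm k))
  -- partial sums
  set P : ℕ → ℕ → ℤ := fun K => ∑ k ∈ range (K+1), (aS d k) • Pi.single (nseq k) (1:ℤ) with hP
  have hPa : ∀ K m, P K m = ∑ k ∈ range (K+1), (if nseq k = m then aS d k else 0) := by
    intro K m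
    simp only [hP]
    rw [Finset.sum_apply]
    refine Finset.sum_congr rfl (fun k _ => ?_)
    simp only [Pi.smul_apply, Pi.single_apply, smul_eq_mul, mul_ite, mul_one, mul_zero]
    by_cases hkm : nseq k = m
    · rw [if_pos hkm, if_pos hkm.symm]
    · rw [if_neg hkm, if_neg (fun hc => hkm hc.symm)]
  have hdvdP : ∀ K m, (snS d (K+1)).2 ∣ x m - P K m := by
    intro K m
    by_cases hm : ∃ l, nseq l = m
    · obtain ⟨l, hl⟩ := hm
      subst hl
      rw [hxval l, hPa]
      by_cases hlK : l < K + 1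
      · rw [Finset.sum_eq_single l]
        · rw [if_pos rfl, sub_self]
          exact dvd_zero _
        · intro b _ hbl
          rw [if_neg (fun hc => hbl (hmono.injective hc))]
        · intro hc; exact absurd (Finset.mem_range.mpr hlK) hc
      · have hz : ∑ k ∈ range (K+1), (if nseq k = nseq l then aS d k else 0) = 0 := by
          refine Finset.sum_eq_zero (fun b hb => if_neg (fun hc => ?_))
          have hbl : b = l := hmono.injective hc
          have := Finset.mem_range.mp hb
          omega
        rw [hz, sub_zero]
        exact (snS_dvd d (Nat.le_of_not_lt hlK)).trans (snS_dvd_a d l)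
    · push_neg at hm
      rw [hxzero _ hm, hPa, Finset.sum_eq_zero (fun k _ => if_neg (hm k)), sub_zero]
      exact dvd_zero _
  have hSsum : ∀ K, (snS d (K+1)).1 = ∑ k ∈ range (K+1), aS d k * d k := by
    intro K
    induction K with
    | zero => rw [snS_succ_1]; simp [snS]
    | succ K ih => rw [snS_succ_1, Finset.sum_range_succ, ← ih]
  have hfP : ∀ K, f (P K) = (snS d (K+1)).1 := by
    intro K
    simp only [hP]
    rw [map_sum, hSsum]
    refine Finset.sum_congr rfl (fun k _ => ?_)
    rw [map_zsmul, smul_eq_mul]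
  have hdvdfx : ∀ K, (snS d (K+1)).2 ∣ f x - (snS d (K+1)).1 := by
    intro K
    have h1 : f x - f (P K) = f (x - P K) := (map_sub f x (P K)).symm
    have h2 := hdvdf ((snS d (K+1)).2) (x - P K) (fun m => by
      simpa [Pi.sub_apply] using hdvdP K m)
    rw [← hfP K, h1]
    exact h2
  set K0 := (Denumerable.eqv ℤ) (f x) with hK0
  have hv : ((Denumerable.eqv ℤ).symm K0 : ℤ) = f x := Equiv.symm_apply_apply _ _
  exact snS_key d K0 (hdne K0) (by rw [hv]; exact hdvdfx K0)

private lemma specker_full (f : (ℕ → ℤ) →+ ℤ) :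
    ∃ N : ℕ, ∀ x : ℕ → ℤ, f x = ∑ n ∈ range N, f (Pi.single n (1:ℤ)) * x n := by
  obtain ⟨N, hN⟩ : ∃ N : ℕ, ∀ n, f (Pi.single n (1:ℤ)) ≠ 0 → n < N := by
    have hfin := spec_S1 f (fun N y hy => dvd_hom f N y hy)
    refine ⟨hfin.toFinset.sup id + 1, fun n hn => ?_⟩
    have : n ∈ hfin.toFinset := hfin.mem_toFinset.mpr hn
    exact Nat.lt_succ_of_le (Finset.le_sup (f := id) this)
  set ψ : (ℕ → ℤ) →+ ℤ := AddMonoidHom.mk' (fun x => ∑ n ∈ range N, f (Pi.single n (1:ℤ)) * x n)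
    (by
      intro x y
      simp only [Pi.add_apply, mul_add]
      rw [Finset.sum_add_distrib]) with hψ
  have hψa : ∀ x, ψ x = ∑ n ∈ range N, f (Pi.single n (1:ℤ)) * x n := fun x => rfl
  set g : (ℕ → ℤ) →+ ℤ := f - ψ with hg
  have hga : ∀ x, g x = f x - ψ x := fun x => rfl
  have hgsingle : ∀ m, g (Pi.single m (1:ℤ)) = 0 := by
    intro m
    rw [hga, hψa]
    by_cases hm : m < N
    · rw [Finset.sum_eq_single m]
      · simp [Pi.single_apply]
      · intro b _ hbm
        simp [Pi.single_apply, hbm]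
      · intro hc; exact absurd (Finset.mem_range.mpr hm) hc
    · have h1 : f (Pi.single m (1:ℤ)) = 0 := by
        by_contra hc; exact hm (hN m hc)
      rw [h1, Finset.sum_eq_zero, sub_zero]
      intro b hb
      have : b ≠ m := by
        intro hbm; subst hbm; exact hm (Finset.mem_range.mp hb)
      simp [Pi.single_apply, Ne.symm this]
  have hgzero : ∀ x, g x = 0 := spec_S2 g (kills_fin hgsingle)
  refine ⟨N, fun x => ?_⟩
  have := hgzero x
  rw [hga, hψa] at this
  linarith

private lemma sigma_add {A : Type} (f : (A → ℤ) →+ ℤ) (x : A → ℤ) (S : ℕ → Set A)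
    (hdisj : ∀ k l, k ≠ l → ∀ a, a ∈ S k → a ∉ S l) :
    ∃ N : ℕ, (∀ n, N ≤ n → f ((S n).indicator x) = 0) ∧
      f ((⋃ n, S n).indicator x) = ∑ n ∈ range N, f ((S n).indicator x) := by
  classical
  set Ψ : (ℕ → ℤ) →+ (A → ℤ) := AddMonoidHom.mk'
    (fun c => fun a => if hh : ∃ n, a ∈ S n then c hh.choose * x a else 0)
    (by
      intro c c'
      funext a
      by_cases hh : ∃ n, a ∈ S n
      · simp only [Pi.add_apply, dif_pos hh, add_mul]
      · simp only [Pi.add_apply, dif_neg hh, add_zero]) with hΨ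
  have hΨa : ∀ c a, Ψ c a = if hh : ∃ n, a ∈ S n then c hh.choose * x a else 0 :=
    fun c a => rfl
  have hΨe : ∀ n, Ψ (Pi.single n (1:ℤ)) = (S n).indicator x := by
    intro n
    funext a
    rw [hΨa]
    by_cases hh : ∃ m, a ∈ S m
    · have hch := hh.choose_spec
      by_cases han : a ∈ S n
      · have : hh.choose = n := by
          by_contra hc
          exact hdisj hh.choose n hc a hch han
        rw [dif_pos hh, this, Set.indicator_of_mem han, Pi.single_eq_same, one_mul]
      · have hne : hh.choose ≠ n := fun hc => han (hc ▸ hch)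
        rw [dif_pos hh, Set.indicator_of_notMem han, Pi.single_eq_of_ne hne, zero_mul]
    · have han : a ∉ S n := fun hc => hh ⟨n, hc⟩
      rw [dif_neg hh, Set.indicator_of_notMem han]
  have hΨ1 : Ψ (fun _ => (1:ℤ)) = (⋃ n, S n).indicator x := by
    funext a
    rw [hΨa]
    by_cases hh : ∃ m, a ∈ S m
    · rw [dif_pos hh, one_mul, Set.indicator_of_mem (Set.mem_iUnion.mpr hh)]
    · rw [dif_neg hh, Set.indicator_of_notMem (fun hc => hh (Set.mem_iUnion.mp hc))]
  obtain ⟨N, hNf⟩ := specker_full (f.comp Ψ)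
  refine ⟨N, ?_, ?_⟩
  · intro n hn
    have := hNf (Pi.single n (1:ℤ))
    rw [AddMonoidHom.comp_apply, hΨe] at this
    rw [this, Finset.sum_eq_zero]
    intro m hm
    have : (m:ℕ) ≠ n := by
      have := Finset.mem_range.mp hm; omega
    rw [Pi.single_eq_of_ne this, mul_zero]
  · have := hNf (fun _ => 1)
    rw [AddMonoidHom.comp_apply, hΨ1] at this
    rw [this]
    refine Finset.sum_congr rfl (fun n _ => ?_)
    rw [mul_one, ← hΨe n, AddMonoidHom.comp_apply]

private lemma los {A : Type} (sep : ℕ → A → ℤ) (hsep : ∀ a b, (∀ n, sep n a = sep n b) → a = b)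
    (f : (A → ℤ) →+ ℤ) (hf : ∀ (a : A) (y : A → ℤ), f (Set.indicator {a} y) = 0) (x : A → ℤ) :
    f x = 0 := by
  classical
  by_contra hs
  have hUnion : ∀ (S : ℕ → Set A), (∀ n T, T ⊆ S n → f (T.indicator x) = 0) →
      ∀ T, T ⊆ (⋃ n, S n) → f (T.indicator x) = 0 := by
    intro S hS T hT
    have hdisj : ∀ k l, k ≠ l → ∀ a, a ∈ (T ∩ disjointed S k) → a ∉ (T ∩ disjointed S l) := by
      intro k l hkl a hak hal
      exact Set.disjoint_left.mp (disjoint_disjointed S hkl) hak.2 hal.2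
    obtain ⟨N, _, hN2⟩ := sigma_add f x (fun n => T ∩ disjointed S n) hdisj
    have hcover : (⋃ n, T ∩ disjointed S n) = T := by
      rw [← Set.inter_iUnion, iUnion_disjointed]
      exact Set.inter_eq_self_of_subset_left hT
    rw [hcover] at hN2
    rw [hN2]
    exact Finset.sum_eq_zero (fun n _ => hS n _ (fun a ha => disjointed_subset S n ha.2))
  have hsing : ∀ (a : A) (T : Set A), T ⊆ {a} → f (T.indicator x) = 0 := by
    intro a T hT
    rcases Set.subset_singleton_iff_eq.mp hT with h | h
    · rw [h, Set.indicator_empty]; exact map_zero f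
    · rw [h]; exact hf a x
  by_cases hat : ∃ S0 : Set A, (¬ ∀ T, T ⊆ S0 → f (T.indicator x) = 0) ∧
      (∀ T, T ⊆ S0 → (∀ T', T' ⊆ T → f (T'.indicator x) = 0) ∨
        (∀ T', T' ⊆ S0 \ T → f (T'.indicator x) = 0))
  · obtain ⟨S0, hS0, hatom⟩ := hat
    have hclass : ∀ n : ℕ, ∃ z : ℤ,
        ¬ ∀ T, T ⊆ {a ∈ S0 | sep n a = z} → f (T.indicator x) = 0 := by
      intro n
      by_contra hc
      push_neg at hc
      apply hS0
      intro T hT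
      refine hUnion (fun k => {a ∈ S0 | sep n a = ((Denumerable.eqv ℤ).symm k : ℤ)})
        (fun k T' hT' => hc _ T' hT') T ?_
      intro a ha
      refine Set.mem_iUnion.mpr ⟨(Denumerable.eqv ℤ) (sep n a), hT ha, ?_⟩
      rw [Equiv.symm_apply_apply]
    choose zf hzf using hclass
    have hB : ∀ n, ∀ T', T' ⊆ S0 \ {a ∈ S0 | sep n a = zf n} → f (T'.indicator x) = 0 := by
      intro n
      rcases hatom {a ∈ S0 | sep n a = zf n} (fun a ha => ha.1) with h | h
      · exact absurd h (hzf n)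
      · exact h
    apply hS0
    intro T hT
    refine hUnion (fun k => Nat.casesOn k (⋂ m, {a ∈ S0 | sep m a = zf m})
        (fun m => S0 \ {a ∈ S0 | sep m a = zf m})) ?_ T ?_
    · intro k
      cases k with
      | zero =>
        intro T' hT'
        by_cases hTe : T' = ∅
        · rw [hTe, Set.indicator_empty]; exact map_zero f
        · obtain ⟨a0, ha0⟩ := Set.nonempty_iff_ne_empty.mpr hTe
          refine hsing a0 T' (fun b hb => ?_)
          have hb' := hT' hb
          have ha0' := hT' ha0
          have hba : b = a0 := hsep b a0 (fun n => by
            have h1 := (Set.mem_iInter.mp hb' n).2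
            have h2 := (Set.mem_iInter.mp ha0' n).2
            rw [h1, h2])
          exact hba ▸ rfl
      | succ m => exact hB m
    · intro a ha
      by_cases hall : ∀ m, sep m a = zf m
      · exact Set.mem_iUnion.mpr ⟨0, Set.mem_iInter.mpr (fun m => ⟨hT ha, hall m⟩)⟩
      · push_neg at hall
        obtain ⟨m, hm⟩ := hall
        exact Set.mem_iUnion.mpr ⟨m+1, ⟨hT ha, fun hc => hm hc.2⟩⟩
  · push_neg at hat
    have hat' : ∀ R : Set A, (¬ ∀ T, T ⊆ R → f (T.indicator x) = 0) →
        ∃ T, T ⊆ R ∧ (¬ ∀ T', T' ⊆ T → f (T'.indicator x) = 0) ∧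
          (¬ ∀ T', T' ⊆ R \ T → f (T'.indicator x) = 0) := by
      intro R hR
      have hR' : ∃ T ⊆ R, f (T.indicator x) ≠ 0 := by push_neg at hR; exact hR
      obtain ⟨T, hT1, hT2, hT3⟩ := hat R hR'
      refine ⟨T, hT1, ?_, ?_⟩
      · push_neg; exact hT2
      · push_neg; exact hT3
    have huniv' : ¬ ∀ T, T ⊆ (Set.univ : Set A) → f (T.indicator x) = 0 := by
      intro hc
      have := hc Set.univ (subset_refl _)
      rw [Set.indicator_univ] at this
      exact hs this
    have hstep : ∀ R : {R : Set A // ¬ ∀ T, T ⊆ R → f (T.indicator x) = 0},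
        ∃ q : (Set A) × {R : Set A // ¬ ∀ T, T ⊆ R → f (T.indicator x) = 0},
          q.1 ⊆ R.1 ∧ (¬ ∀ T, T ⊆ q.1 → f (T.indicator x) = 0) ∧ q.2.1 = R.1 \ q.1 := by
      rintro ⟨R, hR⟩
      obtain ⟨T, hT1, hT2, hT3⟩ := hat' R hR
      exact ⟨(T, ⟨R \ T, hT3⟩), hT1, hT2, rfl⟩
    set step : {R : Set A // ¬ ∀ T, T ⊆ R → f (T.indicator x) = 0} →
        {R : Set A // ¬ ∀ T, T ⊆ R → f (T.indicator x) = 0} :=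
      fun s => (hstep s).choose.2 with hstepdef
    set chain : ℕ → {R : Set A // ¬ ∀ T, T ⊆ R → f (T.indicator x) = 0} :=
      fun k => step^[k] ⟨Set.univ, huniv'⟩ with hchaindef
    have hchain : ∀ k, chain (k+1) = step (chain k) := by
      intro k
      simp only [hchaindef]
      rw [Function.iterate_succ_apply']
    set Ts : ℕ → Set A := fun k => (hstep (chain k)).choose.1 with hTsdef
    have hTsub : ∀ k, Ts k ⊆ (chain k).1 := fun k => ((hstep (chain k)).choose_spec).1
    have hTnn : ∀ k, ¬ ∀ T, T ⊆ Ts k → f (T.indicator x) = 0 :=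
      fun k => ((hstep (chain k)).choose_spec).2.1
    have hRsucc : ∀ k, (chain (k+1)).1 = (chain k).1 \ Ts k := by
      intro k
      rw [hchain k]
      exact ((hstep (chain k)).choose_spec).2.2
    have hRmono : ∀ k l, k ≤ l → (chain l).1 ⊆ (chain k).1 := by
      intro k l h
      induction l, h using Nat.le_induction with
      | base => exact subset_refl _
      | succ l hkl ih =>
        rw [hRsucc l]
        exact Set.diff_subset.trans ih
    have hW : ∀ k, ∃ T, T ⊆ Ts k ∧ f (T.indicator x) ≠ 0 := by
      intro k
      have h1 := hTnn k
      push_neg at h1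
      obtain ⟨T, hT1, hT2⟩ := h1
      exact ⟨T, hT1, hT2⟩
    set W : ℕ → Set A := fun k => (hW k).choose with hWdef
    have hWsub : ∀ k, W k ⊆ Ts k := fun k => (hW k).choose_spec.1
    have hWne : ∀ k, f ((W k).indicator x) ≠ 0 := fun k => (hW k).choose_spec.2
    have hdisj : ∀ k l, k ≠ l → ∀ a, a ∈ W k → a ∉ W l := by
      have key : ∀ k l, k < l → ∀ a, a ∈ W k → a ∉ W l := by
        intro k l hkl a hak hal
        have h1 : a ∈ Ts k := hWsub k hak
        have h2 : a ∈ (chain l).1 := hTsub l (hWsub l hal)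
        have h4 := hRmono (k+1) l hkl h2
        rw [hRsucc k] at h4
        exact h4.2 h1
      intro k l hkl a hak hal
      rcases Nat.lt_or_ge k l with h | h
      · exact key k l h a hak hal
      · exact key l k (lt_of_le_of_ne h (Ne.symm hkl)) a hal hak
    obtain ⟨N, hN1, _⟩ := sigma_add f x W hdisj
    exact hWne N (hN1 N (le_refl N))

private lemma lemC {A J : Type} (H : (A → ℤ) →+ (J →₀ ℤ))
    (Hbad : ∀ (F : Finset A) (G : Finset J), ∃ (x : A → ℤ) (j : J),
      (∀ a ∈ F, x a = 0) ∧ (∃ s : Finset A, ∀ a ∉ s, x a = 0) ∧ j ∉ G ∧ H x j ≠ 0) :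
    False := by
  classical
  -- the step
  have hstep : ∀ s : Finset A × Finset J × ℤ, 0 < s.2.2 →
      ∃ q : (Finset A × Finset J × ℤ) × (A → ℤ) × J,
        0 < q.1.2.2 ∧ s.1 ⊆ q.1.1 ∧ s.2.1 ⊆ q.1.2.1 ∧ s.2.2 ∣ q.1.2.2 ∧
        (∀ a ∉ q.1.1, q.2.1 a = 0) ∧ (∀ a ∈ s.1, q.2.1 a = 0) ∧
        (∀ a, s.2.2 ∣ q.2.1 a) ∧
        q.2.2 ∉ s.2.1 ∧ (∀ j' ∉ q.1.2.1, H q.2.1 j' = 0) ∧ H q.2.1 q.2.2 ≠ 0 ∧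
        q.1.2.2 = 2 * |H q.2.1 q.2.2| := by
    rintro ⟨F, G, N⟩ hN
    obtain ⟨x₀, j, hxF, ⟨s₀, hxs⟩, hjG, hxj⟩ := Hbad F G
    set x : A → ℤ := N • x₀ with hxdef
    have hHx : H x = N • H x₀ := map_zsmul H N x₀
    have hHxj : H x j = N * H x₀ j := by rw [hHx]; simp
    have hxjne : H x j ≠ 0 := by
      rw [hHxj]
      exact mul_ne_zero (by have : (0:ℤ) < N := hN; omega) hxj
    refine ⟨⟨⟨F ∪ s₀, G ∪ (H x).support ∪ {j}, 2 * |H x j|⟩, x, j⟩, ?_, ?_, ?_, ?_, ?_, ?_, ?_, ?_, ?_, ?_, ?_⟩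
    · show (0:ℤ) < 2 * |H x j|
      have := abs_pos.mpr hxjne
      omega
    · exact Finset.subset_union_left
    · exact (Finset.subset_union_left).trans Finset.subset_union_left
    · show N ∣ 2 * |H x j|
      rw [hHxj, abs_mul, abs_of_pos hN]
      exact Dvd.dvd.mul_left (Dvd.intro _ rfl) 2
    · intro a ha
      have : a ∉ s₀ := fun hc => ha (Finset.mem_union_right F hc)
      show N • (x₀ a) = 0
      rw [hxs a this, smul_zero]
    · intro a ha
      show N • (x₀ a) = 0
      rw [hxF a ha, smul_zero]
    · intro a
      show N ∣ N • (x₀ a)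
      rw [smul_eq_mul]
      exact Dvd.intro _ rfl
    · exact hjG
    · intro j' hj'
      have : j' ∉ (H x).support := fun hc =>
        hj' (Finset.mem_union_left _ (Finset.mem_union_right _ hc))
      exact Finsupp.notMem_support_iff.mp this
    · exact hxjne
    · rfl
  -- build the chain
  have hstep' : ∀ s : {s : Finset A × Finset J × ℤ // 0 < s.2.2},
      ∃ q : {s : Finset A × Finset J × ℤ // 0 < s.2.2} × (A → ℤ) × J,
        s.1.1 ⊆ q.1.1.1 ∧ s.1.2.1 ⊆ q.1.1.2.1 ∧ s.1.2.2 ∣ q.1.1.2.2 ∧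
        (∀ a ∉ q.1.1.1, q.2.1 a = 0) ∧ (∀ a ∈ s.1.1, q.2.1 a = 0) ∧
        (∀ a, s.1.2.2 ∣ q.2.1 a) ∧
        q.2.2 ∉ s.1.2.1 ∧ (∀ j' ∉ q.1.1.2.1, H q.2.1 j' = 0) ∧ H q.2.1 q.2.2 ≠ 0 ∧
        q.1.1.2.2 = 2 * |H q.2.1 q.2.2| := by
    rintro ⟨s, hs⟩
    obtain ⟨q, hq0, hq⟩ := hstep s hs
    exact ⟨⟨⟨q.1, hq0⟩, q.2⟩, hq⟩
  set step : {s : Finset A × Finset J × ℤ // 0 < s.2.2} → {s : Finset A × Finset J × ℤ // 0 < s.2.2} :=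
    fun s => (hstep' s).choose.1 with hstepdef
  set chain : ℕ → {s : Finset A × Finset J × ℤ // 0 < s.2.2} :=
    fun k => step^[k] ⟨⟨∅, ∅, 1⟩, one_pos⟩ with hchaindef
  have hchain : ∀ k, chain (k+1) = step (chain k) := by
    intro k
    simp only [hchaindef]
    rw [Function.iterate_succ_apply']
  set xs : ℕ → A → ℤ := fun k => (hstep' (chain k)).choose.2.1 with hxsdef
  set js : ℕ → J := fun k => (hstep' (chain k)).choose.2.2 with hjsdef
  -- named projections
  set Fc : ℕ → Finset A := fun k => (chain k).1.1 with hFcdef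
  set Gc : ℕ → Finset J := fun k => (chain k).1.2.1 with hGcdef
  set Nc : ℕ → ℤ := fun k => (chain k).1.2.2 with hNcdef
  have hNpos : ∀ k, 0 < Nc k := fun k => (chain k).2
  have hspec : ∀ k,
      Fc k ⊆ Fc (k+1) ∧ Gc k ⊆ Gc (k+1) ∧ Nc k ∣ Nc (k+1) ∧
      (∀ a ∉ Fc (k+1), xs k a = 0) ∧ (∀ a ∈ Fc k, xs k a = 0) ∧
      (∀ a, Nc k ∣ xs k a) ∧
      js k ∉ Gc k ∧ (∀ j' ∉ Gc (k+1), H (xs k) j' = 0) ∧ H (xs k) (js k) ≠ 0 ∧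
      Nc (k+1) = 2 * |H (xs k) (js k)| := by
    intro k
    have h1 := (hstep' (chain k)).choose_spec
    have h2 : chain (k+1) = (hstep' (chain k)).choose.1 := hchain k
    simp only [hFcdef, hGcdef, hNcdef, hxsdef, hjsdef, h2]
    exact h1
  have hFmono : ∀ k l, k ≤ l → Fc k ⊆ Fc l := by
    intro k l h
    induction l, h using Nat.le_induction with
    | base => exact subset_refl _
    | succ l hkl ih => exact ih.trans (hspec l).1
  have hGmono : ∀ k l, k ≤ l → Gc k ⊆ Gc l := by
    intro k l h
    induction l, h using Nat.le_induction with
    | base => exact subset_refl _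
    | succ l hkl ih => exact ih.trans (hspec l).2.1
  have hNdvd : ∀ k l, k ≤ l → Nc k ∣ Nc l := by
    intro k l h
    induction l, h using Nat.le_induction with
    | base => exact dvd_rfl
    | succ l hkl ih => exact ih.trans (hspec l).2.2.1
  have hsupp : ∀ k a, xs k a ≠ 0 → a ∈ Fc (k+1) := by
    intro k a h
    by_contra hc
    exact h ((hspec k).2.2.2.1 a hc)
  have hdisjx : ∀ k l, k < l → ∀ a, xs k a ≠ 0 → xs l a = 0 := by
    intro k l hkl a hka
    exact (hspec l).2.2.2.2.1 a (hFmono (k+1) l hkl (hsupp k a hka))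
  set y : A → ℤ := fun a => if hh : ∃ k, xs k a ≠ 0 then xs hh.choose a else 0 with hydef
  have hyval : ∀ K a, Nc (K+1) ∣ y a - ∑ k ∈ range (K+1), xs k a := by
    intro K a
    by_cases hh : ∃ k, xs k a ≠ 0
    · have hch := hh.choose_spec
      have hzero : ∀ k, k ≠ hh.choose → xs k a = 0 := by
        intro k hk
        rcases Nat.lt_or_ge k hh.choose with h | h
        · by_contra hc
          exact hch (hdisjx k hh.choose h a hc)
        · exact hdisjx hh.choose k (lt_of_le_of_ne h (Ne.symm hk)) a hch
      have hy : y a = xs hh.choose a := by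
        simp only [hydef]
        rw [dif_pos hh]
      by_cases hk0K : hh.choose < K + 1
      · rw [hy, Finset.sum_eq_single hh.choose]
        · rw [sub_self]
          exact dvd_zero _
        · intro b _ hb
          exact hzero b hb
        · intro hc
          exact absurd (Finset.mem_range.mpr hk0K) hc
      · rw [hy, Finset.sum_eq_zero (fun b hb => hzero b (by
          intro hc
          subst hc
          exact hk0K (Finset.mem_range.mp hb))), sub_zero]
        exact (hNdvd (K+1) hh.choose (Nat.le_of_not_lt hk0K)).trans
          ((hspec hh.choose).2.2.2.2.2.1 a)
    · simp only [hydef]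
      rw [dif_neg hh]
      rw [Finset.sum_eq_zero (fun b _ => by
        by_contra hc
        exact hh ⟨b, hc⟩), sub_zero]
      exact dvd_zero _
  have hjcross : ∀ k l, k < l → H (xs k) (js l) = 0 := by
    intro k l hkl
    apply (hspec k).2.2.2.2.2.2.2.1
    intro hc
    exact (hspec l).2.2.2.2.2.2.1 (hGmono (k+1) l hkl hc)
  have hjmem : ∀ k, js k ∈ Gc (k+1) := by
    intro k
    by_contra hc
    exact (hspec k).2.2.2.2.2.2.2.2.1 ((hspec k).2.2.2.2.2.2.2.1 _ hc)
  have hjinj : Function.Injective js := by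
    have key : ∀ k l, k < l → js k ≠ js l := by
      intro k l hkl he
      exact (hspec l).2.2.2.2.2.2.1 (hGmono (k+1) l hkl (he ▸ hjmem k))
    intro k l he
    by_contra hne
    rcases Nat.lt_or_ge k l with h | h
    · exact key k l h he
    · exact key l k (lt_of_le_of_ne h (Ne.symm hne)) he.symm
  have hyK : ∀ K, H y (js K) ≠ 0 := by
    intro K
    intro hzero
    set ev : (A → ℤ) →+ ℤ := (Finsupp.applyAddHom (js K)).comp H with hevdef
    have heva : ∀ z, ev z = H z (js K) := fun z => rfl
    have hc0 : H (xs K) (js K) ≠ 0 := (hspec K).2.2.2.2.2.2.2.2.1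
    have hN' : Nc (K+1) = 2 * |H (xs K) (js K)| := (hspec K).2.2.2.2.2.2.2.2.2
    have hdvd2 : Nc (K+1) ∣ ev (y - ∑ k ∈ range (K+1), xs k) := by
      apply dvd_hom
      intro a
      have := hyval K a
      simpa [Finset.sum_apply] using this
    have hPsum : ev (∑ k ∈ range (K+1), xs k) = H (xs K) (js K) := by
      rw [map_sum, Finset.sum_range_succ, Finset.sum_eq_zero, zero_add]
      · exact heva _
      · intro k hk
        rw [heva]
        exact hjcross k K (Finset.mem_range.mp hk)
    have hev_y : ev y = 0 := by rw [heva]; exact hzero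
    have hdc : Nc (K+1) ∣ H (xs K) (js K) := by
      have h3 : ev (y - ∑ k ∈ range (K+1), xs k) = - H (xs K) (js K) := by
        rw [map_sub, hPsum, hev_y, zero_sub]
      rw [h3] at hdvd2
      exact (dvd_neg).mp hdvd2
    have := Int.eq_zero_of_abs_lt_dvd hdc (by
      rw [hN']
      have := abs_pos.mpr hc0
      omega)
    exact hc0 this
  have hinf := Set.infinite_of_injective_forall_mem hjinj
    (fun k => Finset.mem_coe.mpr (Finsupp.mem_support_iff.mpr (hyK k)))
  exact (Finset.finite_toSet (H y).support).not_infinite hinf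

/-- Chase's lemma for copies of ℤ: for a homomorphism h : ∏_{i∈I} ℤ → ⊕_{j∈J} ℤ
there are finite sets F ⊆ I, G ⊆ J and a positive integer n such that
h(n · ∏_{i∈I∖F} ℤ) ⊆ ⊕_{j∈G} ℤ. -/
theorem chase_lemma_int (I J : Type) (h : (I → ℤ) →+ (J →₀ ℤ)) :
    ∃ (F : Finset I) (G : Finset J) (n : ℕ), 0 < n ∧
      ∀ x : I → ℤ, (∀ i ∈ F, x i = 0) → ∀ j ∉ G, h (n • x) j = 0 := by
  classical
  -- reduce to the n = 1 statement
  suffices hkey : ∃ (F : Finset I) (G : Finset J),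
      ∀ x : I → ℤ, (∀ i ∈ F, x i = 0) → ∀ j ∉ G, h x j = 0 by
    obtain ⟨F, G, hFG⟩ := hkey
    exact ⟨F, G, 1, one_pos, fun x hx j hj => by
      rw [one_smul]
      exact hFG x hx j hj⟩
  by_contra hcon
  push_neg at hcon
  have fail : ∀ (F : Finset I) (G : Finset J), ∃ x : I → ℤ,
      (∀ i ∈ F, x i = 0) ∧ ∃ j, j ∉ G ∧ h x j ≠ 0 := by
    intro F G
    obtain ⟨x, hx1, j, hj1, hj2⟩ := hcon F G
    exact ⟨x, hx1, j, hj1, hj2⟩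
  -- not all (F,G) admit finitely supported bad elements
  have hQ : ¬ (∀ (F : Finset I) (G : Finset J), ∃ (x : I → ℤ) (j : J),
      (∀ i ∈ F, x i = 0) ∧ (∃ s : Finset I, ∀ i ∉ s, x i = 0) ∧ j ∉ G ∧ h x j ≠ 0) :=
    fun q => lemC h q
  push_neg at hQ
  obtain ⟨F₀, G₀, hF₀G₀⟩ := hQ
  -- hF₀G₀ : ∀ x j, (off F₀) → (fin supp) → j ∉ G₀ → h x j = 0
  -- build the sequence
  have hstep : ∀ G : Finset J, ∃ q : Finset J × (I → ℤ) × J,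
      G ⊆ q.1 ∧ (∀ i ∈ F₀, q.2.1 i = 0) ∧ q.2.2 ∉ G ∧
      (∀ j' ∉ q.1, h q.2.1 j' = 0) ∧ h q.2.1 q.2.2 ≠ 0 := by
    intro G
    obtain ⟨x, hx1, j, hj1, hj2⟩ := fail F₀ (G ∪ G₀)
    refine ⟨⟨G ∪ (h x).support, x, j⟩, Finset.subset_union_left, hx1,
      fun hc => hj1 (Finset.mem_union_left _ hc), ?_, hj2⟩
    intro j' hj'
    have : j' ∉ (h x).support := fun hc => hj' (Finset.mem_union_right _ hc)
    exact Finsupp.notMem_support_iff.mp this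
  set step : Finset J → Finset J := fun G => (hstep G).choose.1 with hstepdef
  set Gch : ℕ → Finset J := fun k => step^[k] G₀ with hGchdef
  have hGch : ∀ k, Gch (k+1) = step (Gch k) := by
    intro k
    simp only [hGchdef]
    rw [Function.iterate_succ_apply']
  set xs : ℕ → I → ℤ := fun k => (hstep (Gch k)).choose.2.1 with hxsdef
  set js : ℕ → J := fun k => (hstep (Gch k)).choose.2.2 with hjsdef
  have hspec : ∀ k, Gch k ⊆ Gch (k+1) ∧ (∀ i ∈ F₀, xs k i = 0) ∧ js k ∉ Gch k ∧
      (∀ j' ∉ Gch (k+1), h (xs k) j' = 0) ∧ h (xs k) (js k) ≠ 0 := by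
    intro k
    have h1 := (hstep (Gch k)).choose_spec
    have h2 : Gch (k+1) = (hstep (Gch k)).choose.1 := hGch k
    simp only [hxsdef, hjsdef, h2]
    exact h1
  have hGmono : ∀ k l, k ≤ l → Gch k ⊆ Gch l := by
    intro k l hkl
    induction l, hkl using Nat.le_induction with
    | base => exact subset_refl _
    | succ l hkl ih => exact ih.trans (hspec l).1
  have hG₀ : ∀ k, G₀ ⊆ Gch k := by
    intro k
    have : Gch 0 = G₀ := rfl
    rw [← this]
    exact hGmono 0 k (Nat.zero_le k)
  have hjmem : ∀ k, js k ∈ Gch (k+1) := by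
    intro k
    by_contra hc
    exact (hspec k).2.2.2.2 ((hspec k).2.2.2.1 _ hc)
  have hjinj : Function.Injective js := by
    have key : ∀ k l, k < l → js k ≠ js l := by
      intro k l hkl he
      exact (hspec l).2.2.1 (hGmono (k+1) l hkl (he ▸ hjmem k))
    intro k l he
    by_contra hne
    rcases Nat.lt_or_ge k l with hlt | hge
    · exact key k l hlt he
    · exact key l k (lt_of_le_of_ne hge (Ne.symm hne)) he.symm
  -- the reduction map
  set t : I → (ℕ → ℤ) := fun i => fun k => xs k i with htdef
  set θ : ((ℕ → ℤ) → ℤ) →+ (I → ℤ) := AddMonoidHom.mk'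
    (fun a => fun i => a (t i)) (fun a b => rfl) with hθdef
  set H : ((ℕ → ℤ) → ℤ) →+ (J →₀ ℤ) := h.comp θ with hHdef
  -- no finitely supported bad elements for H either... they might exist! use lemC
  have hQ' : ¬ (∀ (F : Finset (ℕ → ℤ)) (G : Finset J), ∃ (a : (ℕ → ℤ) → ℤ) (j : J),
      (∀ v ∈ F, a v = 0) ∧ (∃ s : Finset (ℕ → ℤ), ∀ v ∉ s, a v = 0) ∧ j ∉ G ∧ H a j ≠ 0) :=
    fun q => lemC H q
  push_neg at hQ'
  obtain ⟨F', G'', hF'G''⟩ := hQ'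
  -- vanish on elements supported off F'
  have hvan : ∀ j, j ∉ G'' → ∀ a : (ℕ → ℤ) → ℤ, (∀ v ∈ F', a v = 0) → H a j = 0 := by
    intro j hj a ha
    -- subtype W
    set W := {v : ℕ → ℤ // v ∉ F'} with hWdef
    set ext : (W → ℤ) →+ ((ℕ → ℤ) → ℤ) := AddMonoidHom.mk'
      (fun b => fun v => if hv : v ∈ F' then 0 else b ⟨v, hv⟩)
      (by
        intro b b'
        funext v
        by_cases hv : v ∈ F'
        · simp [hv]
        · simp [hv]) with hextdef
    have hexta : ∀ b v, ext b v = if hv : v ∈ F' then 0 else b ⟨v, hv⟩ := fun b v => rfl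
    set fj : (W → ℤ) →+ ℤ := (Finsupp.applyAddHom j).comp (H.comp ext) with hfjdef
    have hfja : ∀ b, fj b = H (ext b) j := fun b => rfl
    have hsep : ∀ (w w' : W), (∀ n, w.1 n = w'.1 n) → w = w' := by
      intro w w' hw
      exact Subtype.ext (funext hw)
    have hsingle : ∀ (w : W) (yy : W → ℤ), fj (Set.indicator {w} yy) = 0 := by
      intro w yy
      rw [hfja]
      apply hF'G'' (ext (Set.indicator {w} yy)) j
      · intro v hv
        rw [hexta, dif_pos hv]
      · refine ⟨{w.1}, fun v hv => ?_⟩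
        rw [hexta]
        by_cases hvF : v ∈ F'
        · rw [dif_pos hvF]
        · rw [dif_neg hvF]
          have : (⟨v, hvF⟩ : W) ∉ ({w} : Set W) := by
            intro hc
            apply hv
            rw [Finset.mem_singleton]
            have : (⟨v, hvF⟩ : W) = w := hc
            rw [← this]
          exact Set.indicator_of_notMem this yy
      · exact hj
    have := los (fun n => fun w : W => w.1 n) hsep fj hsingle (fun w => a w.1)
    have hae : ext (fun w => a w.1) = a := by
      funext v
      rw [hexta]
      by_cases hv : v ∈ F'
      · rw [dif_pos hv, ha v hv]
      · rw [dif_neg hv]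
    rw [hfja, hae] at this
    exact this
  -- the finite set G'''
  set Gf : Finset J := G'' ∪ F'.biUnion (fun v => (h (fun i => if t i = v then (1:ℤ) else 0)).support) with hGfdef
  have hjGf : ∀ k, js k ∈ Gf := by
    intro k
    by_contra hc
    have hjG'' : js k ∉ G'' := fun hcc => hc (Finset.mem_union_left _ hcc)
    have hjχ : ∀ v ∈ F', h (fun i => if t i = v then (1:ℤ) else 0) (js k) = 0 := by
      intro v hv
      by_contra hcc
      exact hc (Finset.mem_union_right _ (Finset.mem_biUnion.mpr
        ⟨v, hv, Finsupp.mem_support_iff.mpr hcc⟩))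
    -- split u_k
    set u : (ℕ → ℤ) → ℤ := fun v => v k with hudef
    set a1 : (ℕ → ℤ) → ℤ := fun v => if v ∈ F' then v k else 0 with ha1def
    set a2 : (ℕ → ℤ) → ℤ := fun v => if v ∈ F' then 0 else v k with ha2def
    have hu12 : u = a1 + a2 := by
      funext v
      simp only [hudef, ha1def, ha2def, Pi.add_apply]
      by_cases hv : v ∈ F' <;> simp [hv]
    have hθu : θ u = xs k := rfl
    have hHa2 : H a2 (js k) = 0 := by
      apply hvan _ hjG''
      intro v hv
      simp only [ha2def, if_pos hv]
    have hθa1 : θ a1 = ∑ v ∈ F', (v k) • (fun i => if t i = v then (1:ℤ) else 0) := by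
      funext i
      have : θ a1 i = if t i ∈ F' then (t i) k else 0 := rfl
      rw [this, Finset.sum_apply]
      rw [Finset.sum_congr rfl (fun v _ => by
        rw [Pi.smul_apply, smul_eq_mul, mul_ite, mul_one, mul_zero])]
      have hsw : ∀ v : ℕ → ℤ, (if t i = v then v k else 0) = (if v = t i then v k else 0) := by
        intro v
        by_cases hv : t i = v
        · rw [if_pos hv, if_pos hv.symm]
        · rw [if_neg hv, if_neg (fun hc => hv hc.symm)]
      rw [Finset.sum_congr rfl (fun v _ => hsw v), Finset.sum_ite_eq' F' (t i) (fun v => v k)]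
    have hHa1 : h (θ a1) (js k) = 0 := by
      rw [hθa1, map_sum, Finsupp.finset_sum_apply]
      refine Finset.sum_eq_zero (fun v hv => ?_)
      rw [map_zsmul, Finsupp.smul_apply, hjχ v hv, smul_zero]
    have hfinal : H u (js k) = 0 := by
      rw [hu12, map_add, Finsupp.add_apply, hHa2, add_zero]
      show h (θ a1) (js k) = 0
      exact hHa1
    have hux : h (xs k) (js k) = H u (js k) := rfl
    exact (hspec k).2.2.2.2 (by rw [hux, hfinal])
  have hinf := Set.infinite_of_injective_forall_mem hjinj
    (fun k => Finset.mem_coe.mpr (hjGf k))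
  exact (Finset.finite_toSet Gf).not_infinite hinf
end

section
/- The image of any homomorphism h : ℤ^ω → ⊕_κ ℤ into a free abelian group ⊕_κ ℤ is a finitely generated free abelian group. -/
/-- standard basis vector of `ℤ^ω` -/
private def E (i : ℕ) : ℕ → ℤ := fun j => if j = i then 1 else 0

private lemma E_self (i : ℕ) : E i i = 1 := if_pos rfl
private lemma E_ne {i j : ℕ} (hj : j ≠ i) : E i j = 0 := if_neg hj

private lemma exists_smul_of_forall_dvd (m : ℤ) (x : ℕ → ℤ) (hx : ∀ n, m ∣ x n) :
    ∃ u : ℕ → ℤ, x = m • u := by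
  refine ⟨fun n => x n / m, funext fun n => ?_⟩
  simp only [Pi.smul_apply, smul_eq_mul]
  exact (Int.mul_ediv_cancel' (hx n)).symm

private lemma head_add_tail (x : ℕ → ℤ) (N : ℕ) :
    x = (∑ i ∈ Finset.range N, x i • E i) + (fun j => if j < N then 0 else x j) := by
  funext j
  have : (∑ i ∈ Finset.range N, x i • E i) j = ∑ i ∈ Finset.range N, x i * E i j := by
    simp [Finset.sum_apply]
  simp only [Pi.add_apply, this]
  have : ∀ i, x i * E i j = if j = i then x i else 0 := by
    intro i; by_cases hij : j = i <;> simp [E, hij]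
  rw [Finset.sum_congr rfl fun i _ => this i, Finset.sum_ite_eq]
  by_cases hj : j < N <;> simp [hj, Finset.mem_range]

private lemma pow_dvd_hom_of_vanish {M : Type*} [AddCommGroup M]
    (f : (ℕ → ℤ) →+ M) (p : ℤ) (y : ℕ → ℤ) (N : ℕ)
    (hf : ∀ i, i < N → f (E i) = 0) (hy : ∀ n, N ≤ n → p ^ N ∣ y n) :
    ∃ z : M, f y = p ^ N • z := by
  have hdvd : ∀ n, p ^ N ∣ (fun j => if j < N then 0 else y j) n := by
    intro n
    by_cases hn : n < N
    · simp [hn]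
    · simpa [hn] using hy n (le_of_not_gt hn)
  obtain ⟨u, hu⟩ := exists_smul_of_forall_dvd _ _ hdvd
  refine ⟨f u, ?_⟩
  calc f y = f ((∑ i ∈ Finset.range N, y i • E i) + (fun j => if j < N then 0 else y j)) := by
        rw [← head_add_tail]
    _ = f (∑ i ∈ Finset.range N, y i • E i) + f (fun j => if j < N then 0 else y j) := map_add _ _ _
    _ = p ^ N • f u := by
        rw [map_sum, hu, map_zsmul]
        have : ∀ i ∈ Finset.range N, f (y i • E i) = 0 := by
          intro i hi
          rw [map_zsmul, hf i (Finset.mem_range.mp hi), smul_zero]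
        rw [Finset.sum_congr rfl this, Finset.sum_const_zero, zero_add]

private lemma vanish_pow (f : (ℕ → ℤ) →+ ℤ) (hf : ∀ i, f (E i) = 0)
    (p : ℤ) (hp : 2 ≤ p) (y : ℕ → ℤ) (hy : ∀ n, p ^ n ∣ y n) : f y = 0 := by
  by_contra hne
  set c := f y with hc
  have key : ∀ N : ℕ, p ^ N ∣ c := by
    intro N
    obtain ⟨z, hz⟩ := pow_dvd_hom_of_vanish f p y N (fun i _ => hf i)
      (fun n hn => dvd_trans (pow_dvd_pow p hn) (hy n))
    exact ⟨z, by rw [hc, hz]; simp [smul_eq_mul]⟩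
  set N := c.natAbs
  have h1 : p ^ N ≤ |c| := Int.le_of_dvd (abs_pos.mpr hne) ((dvd_abs _ _).mpr (key N))
  have h2 : (2 : ℤ) ^ N ≤ p ^ N := pow_le_pow_left₀ (by norm_num) hp N
  have h3 : (N : ℤ) < 2 ^ N := by exact_mod_cast Nat.lt_two_pow_self (n := N)
  have h4 : |c| = (N : ℤ) := by rw [Int.abs_eq_natAbs]
  omega

private lemma easy_half (f : (ℕ → ℤ) →+ ℤ) (hf : ∀ i, f (E i) = 0) (x : ℕ → ℤ) :
    f x = 0 := by
  have cop : ∀ n : ℕ, ∃ a b : ℤ, a * 2 ^ n + b * 3 ^ n = 1 := by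
    intro n
    have : IsCoprime (2 : ℤ) 3 := Int.isCoprime_iff_gcd_eq_one.mpr (by decide)
    exact (this.pow (m := n) (n := n))
  choose a b hab using cop
  have hx : x = (fun n => a n * 2 ^ n * x n) + (fun n => b n * 3 ^ n * x n) := by
    funext n
    simp only [Pi.add_apply]
    have h := hab n
    calc x n = (a n * 2 ^ n + b n * 3 ^ n) * x n := by rw [h, one_mul]
      _ = a n * 2 ^ n * x n + b n * 3 ^ n * x n := by ring
  rw [hx, map_add]
  rw [vanish_pow f hf 2 le_rfl _ (fun n => ⟨a n * x n, by ring⟩),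
    vanish_pow f hf 3 (by norm_num) _ (fun n => ⟨b n * x n, by ring⟩)]
  simp

/-- shift homomorphism: `(shiftHom N y) m = 0` for `m < N`, `y (m - N)` otherwise -/
private def shiftHom (N : ℕ) : (ℕ → ℤ) →+ (ℕ → ℤ) where
  toFun y := fun m => if m < N then 0 else y (m - N)
  map_zero' := by funext m; by_cases hm : m < N <;> simp [hm]
  map_add' y z := by funext m; by_cases hm : m < N <;> simp [hm]

private lemma easy_half_shifted (f : (ℕ → ℤ) →+ ℤ) (N : ℕ)
    (hf : ∀ i, N ≤ i → f (E i) = 0) (x : ℕ → ℤ) (hx : ∀ i, i < N → x i = 0) :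
    f x = 0 := by
  set g := f.comp (shiftHom N) with hg
  have hgE : ∀ i, g (E i) = 0 := by
    intro i
    have hsh : (shiftHom N) (E i) = E (N + i) := by
      funext m
      simp only [shiftHom, AddMonoidHom.coe_mk, ZeroHom.coe_mk]
      by_cases hm : m < N
      · rw [if_pos hm, E_ne (by omega)]
      · rw [if_neg hm, E]
        have : m - N = i ↔ m = N + i := by omega
        simp only [E, this]
    rw [hg, AddMonoidHom.comp_apply, hsh]
    exact hf (N + i) (by omega)
  have hsx : (shiftHom N) (fun i => x (N + i)) = x := by
    funext m
    simp only [shiftHom, AddMonoidHom.coe_mk, ZeroHom.coe_mk]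
    by_cases hm : m < N
    · rw [if_pos hm, (hx m hm)]
    · rw [if_neg hm, Nat.add_sub_cancel' (le_of_not_gt hm)]
  calc f x = g (fun i => x (N + i)) := by rw [hg, AddMonoidHom.comp_apply, hsx]
    _ = 0 := easy_half g hgE _

section HardHalf

/-- recursion producing `(m K, s K)` for the hard half -/
private def msA (g : ℕ → ℤ) : ℕ → ℤ × ℤ
  | 0 => (1, 0)
  | K + 1 =>
    let p := msA g K
    let s' := p.2 + p.1 * g K
    (2 * p.1 * (1 + |s'|), s')

private lemma msA_m_pos (g : ℕ → ℤ) : ∀ K, 0 < (msA g K).1 := by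
  intro K
  induction K with
  | zero => norm_num [msA]
  | succ K ih =>
    simp only [msA]
    positivity

private lemma msA_s_succ (g : ℕ → ℤ) (K : ℕ) :
    (msA g (K + 1)).2 = (msA g K).2 + (msA g K).1 * g K := rfl

private lemma msA_m_succ (g : ℕ → ℤ) (K : ℕ) :
    (msA g (K + 1)).1 = 2 * (msA g K).1 * (1 + |(msA g (K + 1)).2|) := rfl

private lemma msA_m_dvd (g : ℕ → ℤ) {K L : ℕ} (hKL : K ≤ L) :
    (msA g K).1 ∣ (msA g L).1 := by
  induction L, hKL using Nat.le_induction with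
  | base => rfl
  | succ L hKL ih =>
    refine ih.trans ⟨2 * (1 + |(msA g (L + 1)).2|), by rw [msA_m_succ]; ring⟩

private lemma msA_s_lt (g : ℕ → ℤ) : ∀ K, 2 * |(msA g K).2| < (msA g K).1 := by
  intro K
  induction K with
  | zero => norm_num [msA]
  | succ K ih =>
    rw [msA_m_succ]
    have h1 : 0 < (msA g K).1 := msA_m_pos g K
    nlinarith [abs_nonneg (msA g (K + 1)).2]

private lemma msA_m_ge (g : ℕ → ℤ) : ∀ K : ℕ, (K : ℤ) + 1 ≤ (msA g K).1 := by
  intro K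
  induction K with
  | zero => norm_num [msA]
  | succ K ih =>
    rw [msA_m_succ]
    have h1 : 0 < (msA g K).1 := msA_m_pos g K
    push_cast
    nlinarith [abs_nonneg (msA g (K + 1)).2]

private lemma hard_half (f : (ℕ → ℤ) →+ ℤ) (hinf : {n | f (E n) ≠ 0}.Infinite) : False := by
  classical
  set ν : ℕ → ℕ := fun k => ((hinf.natEmbedding) k : ℕ) with hν
  have hνinj : Function.Injective ν :=
    fun a b hab => (hinf.natEmbedding).injective (Subtype.ext hab)
  have hνne : ∀ k, f (E (ν k)) ≠ 0 := fun k => ((hinf.natEmbedding) k).2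
  set g : ℕ → ℤ := fun k => f (E (ν k)) with hg
  set m : ℕ → ℤ := fun K => (msA g K).1 with hm
  set s : ℕ → ℤ := fun K => (msA g K).2 with hs
  have hss : ∀ K, s (K + 1) = s K + m K * g K := fun K => msA_s_succ g K
  have hslt : ∀ K, 2 * |s K| < m K := fun K => msA_s_lt g K
  have hpos : ∀ K, 0 < m K := fun K => msA_m_pos g K
  have hge : ∀ K : ℕ, (K : ℤ) + 1 ≤ m K := fun K => msA_m_ge g K
  have hdvdm : ∀ {K L : ℕ}, K ≤ L → m K ∣ m L := fun hKL => msA_m_dvd g hKL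
  have hs0 : s 0 = 0 := rfl
  set X : ℕ → (ℕ → ℤ) := fun K => Function.extend ν (fun k => if K ≤ k then m k else 0) 0
    with hX
  have hstep : ∀ K, X K = m K • E (ν K) + X (K + 1) := by
    intro K
    funext n
    by_cases hn : ∃ k, ν k = n
    · obtain ⟨k, rfl⟩ := hn
      simp only [hX, Pi.add_apply, Pi.smul_apply, smul_eq_mul, hνinj.extend_apply]
      by_cases hk : k = K
      · subst hk
        rw [if_pos le_rfl, if_neg (by omega), E_self, mul_one, add_zero]
      · rw [E_ne (fun hc => hk (hνinj hc))]
        by_cases hKk : K ≤ k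
        · rw [if_pos hKk, if_pos (by omega), mul_zero, zero_add]
        · rw [if_neg hKk, if_neg (by omega), mul_zero, zero_add]
    · push_neg at hn
      simp only [hX, Pi.add_apply, Pi.smul_apply, smul_eq_mul]
      rw [Function.extend_apply' _ _ _ (by push_neg; exact hn),
        Function.extend_apply' _ _ _ (by push_neg; exact hn),
        E_ne (fun hc => hn K hc.symm)]
      simp
  have hXdvd : ∀ K n, m K ∣ X K n := by
    intro K n
    by_cases hn : ∃ k, ν k = n
    · obtain ⟨k, rfl⟩ := hn
      simp only [hX, hνinj.extend_apply]
      by_cases hk : K ≤ k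
      · rw [if_pos hk]; exact hdvdm hk
      · rw [if_neg hk]; exact dvd_zero _
    · push_neg at hn
      simp only [hX]
      rw [Function.extend_apply' _ _ _ (by push_neg; exact hn)]
      exact dvd_zero _
  have hfX : ∀ K, f (X K) = m K * g K + f (X (K + 1)) := by
    intro K
    rw [hstep K, map_add, map_zsmul, smul_eq_mul]
  have htel : ∀ K, f (X 0) = s K + f (X K) := by
    intro K
    induction K with
    | zero => rw [hs0, zero_add]
    | succ K ih => rw [ih, hfX K, hss K]; ring
  have hdiv : ∀ K, m K ∣ f (X K) := by
    intro K
    obtain ⟨u, hu⟩ := exists_smul_of_forall_dvd (m K) (X K) (hXdvd K)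
    exact ⟨f u, by rw [hu, map_zsmul, smul_eq_mul]⟩
  set F := f (X 0) with hF
  have key : ∀ K, 2 * |F| < m K → F = s K := by
    intro K hK
    have h1 : m K ∣ F - s K := by
      have h2 := htel K
      have h3 : F - s K = f (X K) := by omega
      rw [h3]; exact hdiv K
    have habs : |F - s K| ≤ |F| + |s K| := abs_sub _ _
    have h2 : |F - s K| < m K := by
      have := hslt K
      omega
    have := Int.eq_zero_of_abs_lt_dvd h1 h2
    omega
  set K₀ := 2 * F.natAbs + 1 with hK₀
  have hcast : (K₀ : ℤ) = 2 * |F| + 1 := by rw [hK₀, Int.abs_eq_natAbs]; push_cast; ring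
  have hb1 : 2 * |F| < m K₀ := by have := hge K₀; omega
  have hb2 : 2 * |F| < m (K₀ + 1) := by have := hge (K₀ + 1); push_cast at this; omega
  have e1 := key K₀ hb1
  have e2 := key (K₀ + 1) hb2
  have e3 := hss K₀
  have hmg : m K₀ * g K₀ = 0 := by omega
  have hgz : g K₀ = 0 := by
    rcases mul_eq_zero.mp hmg with hc | hc
    · have := hpos K₀; omega
    · exact hc
  exact hνne K₀ hgz

end HardHalf

section CaseB

private structure St (κ : Type) where
  n : ℕ
  J : Finset κ
  j : κ
  c : ℤ
  m : ℤ
  σ : κ →₀ ℤ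

variable {κ : Type}

private lemma exists_next (h : (ℕ → ℤ) →+ (κ →₀ ℤ))
    (hA : ∀ j : κ, {n | h (E n) j ≠ 0}.Finite)
    (hinf : {n | h (E n) ≠ 0}.Infinite) (N : ℕ) (J : Finset κ) :
    ∃ n : ℕ, N < n ∧ h (E n) ≠ 0 ∧ ∀ j ∈ J, h (E n) j = 0 := by
  have hfin : ((⋃ j ∈ (J : Set κ), {n | h (E n) j ≠ 0}) ∪ Set.Iic N).Finite :=
    (Set.Finite.biUnion J.finite_toSet (fun j _ => hA j)).union (Set.finite_Iic N)
  obtain ⟨n, hn⟩ := (hinf.diff hfin).nonempty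
  rw [Set.mem_diff] at hn
  have hn2 := hn.2
  simp only [Set.mem_union, Set.mem_iUnion, Set.mem_Iic, Set.mem_setOf_eq, not_or, not_exists,
    not_not, Finset.mem_coe] at hn2
  exact ⟨n, by omega, hn.1, fun j hj => hn2.1 j hj⟩

variable (h : (ℕ → ℤ) →+ (κ →₀ ℤ))
  (hA : ∀ j : κ, {n | h (E n) j ≠ 0}.Finite)
  (hinf : {n | h (E n) ≠ 0}.Infinite)

private noncomputable def nextn (s : St κ) : ℕ := (exists_next h hA hinf s.n s.J).choose

private lemma nextn_spec (s : St κ) :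
    s.n < nextn h hA hinf s ∧ h (E (nextn h hA hinf s)) ≠ 0 ∧
      ∀ j ∈ s.J, h (E (nextn h hA hinf s)) j = 0 :=
  (exists_next h hA hinf s.n s.J).choose_spec

private noncomputable def nextj (s : St κ) : κ :=
  (Finsupp.ne_iff.mp (nextn_spec h hA hinf s).2.1).choose

private lemma nextj_spec (s : St κ) :
    h (E (nextn h hA hinf s)) (nextj h hA hinf s) ≠ 0 := by
  have := (Finsupp.ne_iff.mp (nextn_spec h hA hinf s).2.1).choose_spec
  exact this

private noncomputable def nextc (s : St κ) : ℤ := s.m * (1 + |s.σ (nextj h hA hinf s)|)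

attribute [local instance] Classical.propDecidable

private noncomputable def step (s : St κ) : St κ where
  n := nextn h hA hinf s
  J := insert (nextj h hA hinf s) s.J
  j := nextj h hA hinf s
  c := nextc h hA hinf s
  m := s.m * (1 + |nextc h hA hinf s|) *
    (1 + |(s.σ + nextc h hA hinf s • h (E (nextn h hA hinf s))) (nextj h hA hinf s)|)
  σ := s.σ + nextc h hA hinf s • h (E (nextn h hA hinf s))

private lemma step_m_ge (s : St κ) (hs : 1 ≤ s.m) : 1 ≤ (step h hA hinf s).m := by
  show 1 ≤ s.m * (1 + |nextc h hA hinf s|) * (1 + _)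
  have h1 : (0:ℤ) ≤ |nextc h hA hinf s| := abs_nonneg _
  have h2 : (0:ℤ) ≤ |(s.σ + nextc h hA hinf s • h (E (nextn h hA hinf s)))
    (nextj h hA hinf s)| := abs_nonneg _
  have h3 : 1 ≤ s.m * (1 + |nextc h hA hinf s|) := by nlinarith
  nlinarith

private lemma step_A (s : St κ) :
    (step h hA hinf s).σ ((step h hA hinf s).j) =
      s.σ (nextj h hA hinf s) +
        nextc h hA hinf s * (h (E (nextn h hA hinf s)) (nextj h hA hinf s)) := by
  show (s.σ + nextc h hA hinf s • h (E (nextn h hA hinf s))) (nextj h hA hinf s) = _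
  rw [Finsupp.add_apply, Finsupp.smul_apply, smul_eq_mul]

private lemma step_A_ne (s : St κ) (hs : 1 ≤ s.m) :
    (step h hA hinf s).σ ((step h hA hinf s).j) ≠ 0 := by
  rw [step_A]
  set B := s.σ (nextj h hA hinf s) with hB
  set d := h (E (nextn h hA hinf s)) (nextj h hA hinf s) with hd
  have hdne : d ≠ 0 := nextj_spec h hA hinf s
  have hd1 : 1 ≤ |d| := by rcases abs_pos.mpr hdne with hp; omega
  have hc : nextc h hA hinf s = s.m * (1 + |B|) := rfl
  intro hzero
  have h1 : |nextc h hA hinf s * d| = s.m * (1 + |B|) * |d| := by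
    rw [abs_mul, hc, abs_of_nonneg (by positivity : (0:ℤ) ≤ s.m * (1 + |B|))]
  have h2 : nextc h hA hinf s * d = -B := by omega
  have h3 : |nextc h hA hinf s * d| ≤ |B| := by rw [h2, abs_neg]
  have h4 : (0:ℤ) ≤ |B| := abs_nonneg _
  have k1 : (1 + |B|) ≤ s.m * (1 + |B|) := le_mul_of_one_le_left (by positivity) hs
  have k2 : s.m * (1 + |B|) ≤ s.m * (1 + |B|) * |d| :=
    le_mul_of_one_le_right (by positivity) hd1
  linarith

private lemma step_A_lt (s : St κ) (hs : 1 ≤ s.m) :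
    |(step h hA hinf s).σ ((step h hA hinf s).j)| < (step h hA hinf s).m := by
  have hm : (step h hA hinf s).m = s.m * (1 + |nextc h hA hinf s|) *
      (1 + |(step h hA hinf s).σ ((step h hA hinf s).j)|) := rfl
  set A := (step h hA hinf s).σ ((step h hA hinf s).j)
  have h1 : (0:ℤ) ≤ |nextc h hA hinf s| := abs_nonneg _
  have h2 : (0:ℤ) ≤ |A| := abs_nonneg _
  have k0 : (1:ℤ) ≤ s.m * (1 + |nextc h hA hinf s|) := by nlinarith
  have k1 : (1 + |A|) ≤ s.m * (1 + |nextc h hA hinf s|) * (1 + |A|) :=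
    le_mul_of_one_le_left (by positivity) k0
  linarith

private lemma step_j_fresh (s : St κ) : (step h hA hinf s).j ∉ s.J := by
  intro hmem
  exact nextj_spec h hA hinf s ((nextn_spec h hA hinf s).2.2 _ hmem)

private lemma step_m_dvd (s : St κ) : s.m ∣ (step h hA hinf s).m :=
  ⟨(1 + |nextc h hA hinf s|) *
    (1 + |(s.σ + nextc h hA hinf s • h (E (nextn h hA hinf s))) (nextj h hA hinf s)|),
    by show s.m * _ * _ = _; ring⟩

private lemma step_c_dvd (s : St κ) : s.m ∣ (step h hA hinf s).c :=
  ⟨1 + |s.σ (nextj h hA hinf s)|, rfl⟩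

private lemma caseB (h : (ℕ → ℤ) →+ (κ →₀ ℤ))
    (hA : ∀ j : κ, {n | h (E n) j ≠ 0}.Finite)
    (hinf : {n | h (E n) ≠ 0}.Infinite) : False := by
  classical
  obtain ⟨n₁, hn₁⟩ := hinf.nonempty
  obtain ⟨j₀, -⟩ := Finsupp.ne_iff.mp hn₁
  set F : ℕ → St κ := fun i =>
    Nat.rec (step h hA hinf ⟨0, ∅, j₀, 0, 1, 0⟩) (fun _ s => step h hA hinf s) i with hFdef
  have hF0 : F 0 = step h hA hinf ⟨0, ∅, j₀, 0, 1, 0⟩ := rfl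
  have hFs : ∀ i, F (i + 1) = step h hA hinf (F i) := fun i => rfl
  have hm1 : ∀ i, 1 ≤ (F i).m := by
    intro i
    induction i with
    | zero => rw [hF0]; exact step_m_ge h hA hinf _ (by norm_num)
    | succ i ih => rw [hFs]; exact step_m_ge h hA hinf _ ih
  have hchain : ∀ i l, i ≤ l → (F i).m ∣ (F l).m := by
    intro i l hil
    induction l, hil using Nat.le_induction with
    | base => rfl
    | succ l hil ih => exact ih.trans (by rw [hFs]; exact step_m_dvd h hA hinf (F l))
  have hcd : ∀ i, (F i).m ∣ (F (i + 1)).c := by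
    intro i; rw [hFs]; exact step_c_dvd h hA hinf (F i)
  have hcl : ∀ l i, l < i → (F l).m ∣ (F i).c := by
    intro l i hli
    obtain ⟨k, rfl⟩ : ∃ k, i = k + 1 := ⟨i - 1, by omega⟩
    exact (hchain l k (by omega)).trans (hcd k)
  have hAne : ∀ i, (F i).σ ((F i).j) ≠ 0 := by
    intro i
    cases i with
    | zero => rw [hF0]; exact step_A_ne h hA hinf _ (by norm_num)
    | succ i => rw [hFs]; exact step_A_ne h hA hinf _ (hm1 i)
  have hAlt : ∀ i, |(F i).σ ((F i).j)| < (F i).m := by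
    intro i
    cases i with
    | zero => rw [hF0]; exact step_A_lt h hA hinf _ (by norm_num)
    | succ i => rw [hFs]; exact step_A_lt h hA hinf _ (hm1 i)
  have hσ : ∀ i, (F (i + 1)).σ = (F i).σ + (F (i + 1)).c • h (E ((F (i + 1)).n)) := fun i => rfl
  have hσ0 : (F 0).σ = (F 0).c • h (E ((F 0).n)) := by
    show (0 : κ →₀ ℤ) + _ = _
    rw [zero_add]
    rfl
  have hnlt : ∀ i, (F i).n < (F (i + 1)).n := by
    intro i; rw [hFs]; exact (nextn_spec h hA hinf (F i)).1
  set ν : ℕ → ℕ := fun i => (F i).n with hν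
  have hνinj : Function.Injective ν := (strictMono_nat_of_lt_succ hnlt).injective
  have hjJ : ∀ i, (F i).j ∈ (F i).J := by
    intro i
    cases i with
    | zero => rw [hF0]; exact Finset.mem_insert_self _ _
    | succ i => rw [hFs]; exact Finset.mem_insert_self _ _
  have hJmono : ∀ i l, i ≤ l → (F i).J ⊆ (F l).J := by
    intro i l hil
    induction l, hil using Nat.le_induction with
    | base => exact Finset.Subset.refl _
    | succ l hil ih =>
      refine ih.trans ?_
      rw [hFs]
      exact Finset.subset_insert _ _
  have hfresh : ∀ i, (F (i + 1)).j ∉ (F i).J := by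
    intro i; rw [hFs]; exact step_j_fresh h hA hinf (F i)
  have hjne : ∀ i l, i < l → (F i).j ≠ (F l).j := by
    intro i l hil heq
    obtain ⟨k, rfl⟩ : ∃ k, l = k + 1 := ⟨l - 1, by omega⟩
    exact hfresh k (heq ▸ hJmono i k (by omega) (hjJ i))
  have hjinj : Function.Injective (fun i => (F i).j) := by
    intro a b hab
    by_contra hne
    rcases Nat.lt_or_ge a b with hlt | hge
    · exact hjne a b hlt hab
    · exact hjne b a (by omega) hab.symm
  set X : ℕ → (ℕ → ℤ) := fun l =>
    Function.extend ν (fun i => if l ≤ i then (F i).c else 0) 0 with hX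
  have hstep : ∀ l, X l = (F l).c • E (ν l) + X (l + 1) := by
    intro l
    funext n
    by_cases hn : ∃ k, ν k = n
    · obtain ⟨k, rfl⟩ := hn
      simp only [hX, Pi.add_apply, Pi.smul_apply, smul_eq_mul, hνinj.extend_apply]
      by_cases hk : k = l
      · subst hk
        rw [if_pos le_rfl, if_neg (by omega), E_self, mul_one, add_zero]
      · rw [E_ne (fun hc => hk (hνinj hc))]
        by_cases hlk : l ≤ k
        · rw [if_pos hlk, if_pos (by omega), mul_zero, zero_add]
        · rw [if_neg hlk, if_neg (by omega), mul_zero, zero_add]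
    · push_neg at hn
      simp only [hX, Pi.add_apply, Pi.smul_apply, smul_eq_mul]
      rw [Function.extend_apply' _ _ _ (by push_neg; exact hn),
        Function.extend_apply' _ _ _ (by push_neg; exact hn),
        E_ne (fun hc => hn l hc.symm)]
      simp
  have hXdvd : ∀ l n, (F l).m ∣ X (l + 1) n := by
    intro l n
    by_cases hn : ∃ k, ν k = n
    · obtain ⟨k, rfl⟩ := hn
      simp only [hX, hνinj.extend_apply]
      by_cases hk : l + 1 ≤ k
      · rw [if_pos hk]; exact hcl l k (by omega)
      · rw [if_neg hk]; exact dvd_zero _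
    · push_neg at hn
      simp only [hX]
      rw [Function.extend_apply' _ _ _ (by push_neg; exact hn)]
      exact dvd_zero _
  have htel : ∀ l, h (X 0) = (F l).σ + h (X (l + 1)) := by
    intro l
    induction l with
    | zero => rw [hstep 0, map_add, map_zsmul, hσ0]
    | succ l ih =>
      rw [ih, hstep (l + 1), map_add, map_zsmul, ← add_assoc, ← hσ l]
  have hmem : ∀ l, (F l).j ∈ (h (X 0)).support := by
    intro l
    rw [Finsupp.mem_support_iff]
    intro hzero
    obtain ⟨u, hu⟩ := exists_smul_of_forall_dvd ((F l).m) (X (l + 1)) (hXdvd l)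
    have hw : (h (X (l + 1))) ((F l).j) = (F l).m * (h u) ((F l).j) := by
      rw [hu, map_zsmul, Finsupp.smul_apply, smul_eq_mul]
    have happ := congrArg (fun z : κ →₀ ℤ => z ((F l).j)) (htel l)
    simp only [Finsupp.add_apply] at happ
    have hsum : (F l).σ ((F l).j) + (F l).m * (h u) ((F l).j) = 0 := by
      rw [← hw, ← happ]; exact hzero
    have hdvd : (F l).m ∣ (F l).σ ((F l).j) :=
      ⟨-((h u) ((F l).j)), by rw [mul_neg]; omega⟩
    exact hAne l (Int.eq_zero_of_abs_lt_dvd hdvd (hAlt l))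
  exact ((h (X 0)).support.finite_toSet).not_infinite
    (Set.infinite_of_injective_forall_mem hjinj hmem)

end CaseB

private lemma main_finite {κ : Type} (h : (ℕ → ℤ) →+ (κ →₀ ℤ)) :
    {n | h (E n) ≠ 0}.Finite := by
  by_contra hfin
  have hinf : {n | h (E n) ≠ 0}.Infinite := hfin
  by_cases hc : ∃ j, {n | h (E n) j ≠ 0}.Infinite
  · obtain ⟨j, hj⟩ := hc
    exact hard_half ((Finsupp.applyAddHom j).comp h) hj
  · push_neg at hc
    exact caseB h (fun j => hc j) hinf

private lemma key_repr {κ : Type} (h : (ℕ → ℤ) →+ (κ →₀ ℤ)) :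
    ∃ N : ℕ, ∀ x : ℕ → ℤ, h x = ∑ i ∈ Finset.range N, x i • h (E i) := by
  have hfin := main_finite h
  obtain ⟨b, hb⟩ := hfin.bddAbove
  refine ⟨b + 1, fun x => ?_⟩
  have hde := head_add_tail x (b + 1)
  have htail : h (fun j => if j < b + 1 then 0 else x j) = 0 := by
    ext j
    have := easy_half_shifted ((Finsupp.applyAddHom j).comp h) (b + 1)
      (fun i hi => ?_) (fun m => if m < b + 1 then 0 else x m) (fun i hi => if_pos hi)
    · simpa using this
    · have hE : h (E i) = 0 := by
        by_contra hne
        exact absurd (hb hne) (by omega)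
      simp [hE]
  calc h x = h ((∑ i ∈ Finset.range (b + 1), x i • E i) +
        (fun j => if j < b + 1 then 0 else x j)) := by rw [← hde]
    _ = ∑ i ∈ Finset.range (b + 1), x i • h (E i) := by
        rw [map_add, htail, add_zero, map_sum]
        exact Finset.sum_congr rfl fun i _ => map_zsmul h _ _

/-- The image of any homomorphism from ℤ^ω to a free abelian group ⊕_κ ℤ is a
finitely generated free abelian group. -/
theorem image_of_specker_in_free_abelian_is_fg_free (κ : Type)
    (h : (ℕ → ℤ) →+ (κ →₀ ℤ)) :
    h.range.FG ∧ ∃ m : ℕ, Nonempty (h.range ≃+ (Fin m → ℤ)) := by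
  classical
  obtain ⟨N, hN⟩ := key_repr h
  have hfg : h.range.FG := by
    rw [AddSubgroup.fg_iff]
    refine ⟨(fun i => h (E i)) '' (Set.Iio N), le_antisymm ?_ ?_, (Set.finite_Iio N).image _⟩
    · rw [AddSubgroup.closure_le]
      rintro y ⟨i, -, rfl⟩
      exact ⟨E i, rfl⟩
    · rintro y ⟨x, rfl⟩
      rw [hN x]
      refine AddSubgroup.sum_mem _ fun i hi => ?_
      exact AddSubgroup.zsmul_mem _
        (AddSubgroup.subset_closure
          (Set.mem_image_of_mem _ (show i ∈ Set.Iio N from Finset.mem_range.mp hi))) _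
  refine ⟨hfg, ?_⟩
  haveI : AddGroup.FG h.range := (AddGroup.fg_iff_addSubgroup_fg h.range).mpr hfg
  haveI : Module.Finite ℤ h.range := Module.Finite.iff_addGroup_fg.mpr inferInstance
  haveI : NoZeroSMulDivisors ℤ h.range :=
    { eq_zero_or_eq_zero_of_smul_eq_zero := by
        intro n x hnx
        have h1 : n • (x : κ →₀ ℤ) = 0 := by
          have h2 := congrArg (fun z : h.range => (z : κ →₀ ℤ)) hnx
          push_cast at h2
          exact h2
        rcases smul_eq_zero.mp h1 with hn | hx
        · exact Or.inl hn
        · exact Or.inr (Subtype.ext hx) }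
  haveI : Module.Free ℤ h.range := Module.free_of_finite_type_torsion_free'
  exact ⟨Module.finrank ℤ h.range, ⟨(Module.finBasis ℤ h.range).equivFun.toAddEquiv⟩⟩
end

section
/- Hom(ℚ, ℤ) = 0 and Hom(ℤ^ω/⊕_ω ℤ, ℤ) = 0. -/
/-!
The only integer divisible by all powers of some `a` with `|a| ≠ 1` is `0`. For `f : ℚ →+ ℤ`,
`f q = 2 ^ k * f (q / 2 ^ k)` for every `k`. For `φ : ℤ^ℕ →+ ℤ` vanishing on finitely supported
sequences: if `a ^ n ∣ x n` for all `n`, then `x` agrees with a multiple of `a ^ k` outside finitely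
many coordinates, so `a ^ k ∣ φ x` for every `k`. Since `2 ^ n` and `3 ^ n` are coprime, every
sequence is the sum of such a sequence for `a = 2` and one for `a = 3`.
-/

/-- The subgroup ⊕_ω ℤ of finitely supported sequences inside ℤ^ω. -/
noncomputable def finSuppSubgroup : AddSubgroup (ℕ → ℤ) :=
  (Finsupp.coeFnAddHom : (ℕ →₀ ℤ) →+ (ℕ → ℤ)).range

theorem Int.eq_zero_of_forall_pow_dvd_s15 {a m : ℤ} (ha : a.natAbs ≠ 1) (h : ∀ k : ℕ, a ^ k ∣ m) :
    m = 0 := by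
  by_contra hm
  obtain ⟨k, hk⟩ := Int.finiteMultiplicity_iff.mpr ⟨ha, hm⟩
  exact hk (h (k + 1))

theorem AddMonoidHom.eq_zero_of_divisibleBy {A : Type*} [AddGroup A] [DivisibleBy A ℤ]
    (f : A →+ ℤ) : f = 0 := by
  ext x
  refine Int.eq_zero_of_forall_pow_dvd_s15 (a := 2) (by decide) fun k => ?_
  rw [← DivisibleBy.div_cancel (n := (2 : ℤ) ^ k) x (by positivity), map_zsmul, smul_eq_mul]
  exact dvd_mul_right _ _

theorem mem_finSuppSubgroup_of_support_finite {x : ℕ → ℤ} (hx : (Function.support x).Finite) :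
    x ∈ finSuppSubgroup :=
  ⟨Finsupp.ofSupportFinite x hx, rfl⟩

theorem exists_add_eq_forall_pow_dvd {a b : ℤ} (hab : IsCoprime a b) (x : ℕ → ℤ) :
    ∃ y z : ℕ → ℤ, y + z = x ∧ (∀ n, a ^ n ∣ y n) ∧ ∀ n, b ^ n ∣ z n := by
  choose u v huv using fun n => hab.pow (m := n) (n := n)
  refine ⟨fun n => u n * a ^ n * x n, fun n => v n * b ^ n * x n, ?_, ?_, ?_⟩
  · funext n
    simp only [Pi.add_apply]
    linear_combination x n * huv n
  · exact fun n => ⟨u n * x n, by ring⟩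
  · exact fun n => ⟨v n * x n, by ring⟩

theorem pow_dvd_of_forall_pow_dvd_apply (φ : (ℕ → ℤ) →+ ℤ) (hφ : finSuppSubgroup ≤ φ.ker)
    {a : ℤ} {x : ℕ → ℤ} (hx : ∀ n, a ^ n ∣ x n) (k : ℕ) :
    a ^ k ∣ φ x := by
  choose c hc using hx
  -- `x - a ^ k • z` vanishes from coordinate `k` on; below `k` the truncated `n - k` is harmless.
  set z : ℕ → ℤ := fun n => a ^ (n - k) * c n
  have hfin : x - a ^ k • z ∈ finSuppSubgroup := by
    refine mem_finSuppSubgroup_of_support_finite ((Set.finite_lt_nat k).subset fun n hn => ?_)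
    by_contra hkn
    apply hn
    simp only [Pi.sub_apply, Pi.smul_apply, smul_eq_mul, hc n, z, ← mul_assoc, ← pow_add,
      Nat.add_sub_of_le (not_lt.mp hkn), sub_self]
  have hφx : φ x = a ^ k * φ z := by
    rw [← sub_add_cancel x (a ^ k • z), map_add, hφ hfin, map_zsmul, zero_add, smul_eq_mul]
  exact hφx ▸ dvd_mul_right _ _

theorem eq_zero_of_finSuppSubgroup_le_ker (φ : (ℕ → ℤ) →+ ℤ) (hφ : finSuppSubgroup ≤ φ.ker) :
    φ = 0 := by
  ext x
  obtain ⟨y, z, rfl, hy, hz⟩ := exists_add_eq_forall_pow_dvd (a := 2) (b := 3)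
    (Int.isCoprime_iff_gcd_eq_one.mpr rfl) x
  have hφy := Int.eq_zero_of_forall_pow_dvd_s15 (by decide) (pow_dvd_of_forall_pow_dvd_apply φ hφ hy)
  have hφz := Int.eq_zero_of_forall_pow_dvd_s15 (by decide) (pow_dvd_of_forall_pow_dvd_apply φ hφ hz)
  simp [hφy, hφz]

/-- Hom(ℚ, ℤ) = 0 and Hom(ℤ^ω/⊕_ω ℤ, ℤ) = 0. -/
theorem hom_rat_int_zero_and_hom_specker_quotient_int_zero :
    (∀ f : ℚ →+ ℤ, f = 0) ∧
    (∀ g : ((ℕ → ℤ) ⧸ finSuppSubgroup) →+ ℤ, g = 0) := by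
  refine ⟨AddMonoidHom.eq_zero_of_divisibleBy, fun g => QuotientAddGroup.addMonoidHom_ext _ ?_⟩
  refine (eq_zero_of_finSuppSubgroup_le_ker _ fun s hs => ?_).trans (AddMonoidHom.zero_comp _).symm
  simpa using congrArg g ((QuotientAddGroup.eq_zero_iff s).mpr hs)
end

section
/- For any homomorphism h : ∏_{i∈ℕ} ℤ → ⊕_{j∈J} ℤ there exists n such that h(∏_{i≥n} ℤ) ⊆ ⊕_{j∈G} ℤ for some finite G ⊆ J. -/
open Finset

/-- Auxiliary lemma: given the recursively constructed data, derive `False`. -/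
private lemma chase_aux (J : Type) [DecidableEq J] (h : (ℕ → ℤ) →+ (J →₀ ℤ))
    (c : ℕ → ℤ) (s : ℕ → ℕ → ℤ) (xx : ℕ → ℕ → ℤ) (jj : ℕ → J) (F : ℕ → Finset J)
    (hc0 : c 0 = 1) (hs0 : s 0 = 0)
    (hcs : ∀ k, c (k+1) = c k * (1 + |h (xx k) (jj k)|))
    (hss : ∀ k, s (k+1) = s k + c k • xx k)
    (hFs : ∀ k, F (k+1) = insert (jj k) (F k))
    (hx0 : ∀ k, ∀ i < k, xx k i = 0)
    (hjs : ∀ k, h (s k) (jj k) = 0)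
    (hjF : ∀ k, jj k ∉ F k)
    (hjne : ∀ k, h (xx k) (jj k) ≠ 0) : False := by
  classical
  -- positivity of c
  have hcpos : ∀ k, 0 < c k := by
    intro k
    induction k with
    | zero => simp [hc0]
    | succ n ih => rw [hcs n]; positivity
  -- divisibility
  have hdvd : ∀ k l, k ≤ l → c k ∣ c l := by
    intro k l hkl
    induction l, hkl using Nat.le_induction with
    | base => exact dvd_rfl
    | succ n hn ih => rw [hcs n]; exact ih.mul_right _
  set y : ℕ → ℤ := fun i => ∑ k ∈ Finset.range (i+1), c k * xx k i with hy
  -- key: tails are divisible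
  have hkey : ∀ K, ∃ z : ℕ → ℤ, h y = h (s K) + c K • h z := by
    intro K
    suffices hz : ∃ z : ℕ → ℤ, y = s K + c K • z by
      obtain ⟨z, hz⟩ := hz
      exact ⟨z, by rw [hz, map_add, map_zsmul]⟩
    have hsi : ∀ L i, s L i = ∑ k ∈ Finset.range L, c k * xx k i := by
      intro L i
      induction L with
      | zero => simp [hs0]
      | succ n ih =>
        rw [hss n, Finset.sum_range_succ, ← ih]
        simp [smul_eq_mul]
    have hdvd2 : ∀ i, c K ∣ y i - s K i := by
      intro i
      have e1 : y i = ∑ k ∈ Finset.range (max (i+1) K), c k * xx k i := by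
        rw [hy]
        refine Finset.sum_subset (Finset.range_subset_range.2 (le_max_left _ _)) ?_
        intro k _ hk
        rw [Finset.mem_range, not_lt] at hk
        rw [hx0 k i (by omega), mul_zero]
      rw [e1, hsi K i, ← Finset.sum_Ico_eq_sub _ (le_max_right _ _)]
      refine Finset.dvd_sum ?_
      intro k hk
      rw [Finset.mem_Ico] at hk
      exact (hdvd K k hk.1).mul_right _
    choose t ht using fun i => (hdvd2 i)
    refine ⟨t, funext fun i => ?_⟩
    have := ht i
    simp only [Pi.add_apply, Pi.smul_apply, smul_eq_mul]
    omega
  -- h y is nonzero at each jj K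
  have hney : ∀ K, h y (jj K) ≠ 0 := by
    intro K
    obtain ⟨z, hz⟩ := hkey (K+1)
    have hsub : (h (s (K+1))) (jj K) = c K * h (xx K) (jj K) := by
      rw [hss K, map_add, map_zsmul]
      simp [hjs K]
    have hval : h y (jj K) = c K * h (xx K) (jj K) + c (K+1) * (h z) (jj K) := by
      rw [hz]
      simp [hsub]
    intro h0
    rw [hval] at h0
    set a := h (xx K) (jj K) with ha
    have ha1 : 1 ≤ |a| := Int.one_le_abs (hjne K)
    have hd : c (K+1) ∣ c K * a := ⟨-((h z) (jj K)), by linarith⟩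
    have hle : c (K+1) ≤ |c K * a| :=
      Int.le_of_dvd (abs_pos.2 (mul_ne_zero (hcpos K).ne' (hjne K))) ((dvd_abs _ _).2 hd)
    rw [abs_mul, abs_of_pos (hcpos K), hcs K] at hle
    have := hcpos K
    nlinarith
  -- jj lands in the support of h y, and is injective
  have hmem : ∀ k l, k < l → jj k ∈ F l := by
    intro k l hkl
    induction l, hkl using Nat.le_induction with
    | base => rw [hFs k]; exact Finset.mem_insert_self _ _
    | succ n hn ih => rw [hFs n]; exact Finset.mem_insert_of_mem ih
  have hinj : Function.Injective jj := by
    intro k l hkl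
    by_contra hne
    rcases Nat.lt_or_ge k l with hlt | hge
    · exact hjF l (hkl ▸ hmem k l hlt)
    · exact hjF k (hkl ▸ hmem l k (by omega))
  have hfin : ((h y).support : Set J).Finite := Finset.finite_toSet _
  refine hfin.not_infinite ?_
  exact Set.infinite_of_injective_forall_mem (f := jj) hinj
    (fun k => by simpa [Finsupp.mem_support_iff] using hney k)

/-- Chase's lemma specialized to copies of ℤ: for any homomorphism
h : ∏_{i∈ℕ} ℤ → ⊕_{j∈J} ℤ there is n such that the image of the tail product
∏_{i≥n} ℤ lies in ⊕_{j∈G} ℤ for some finite G ⊆ J. -/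
theorem chase_lemma_tails (J : Type) (h : (ℕ → ℤ) →+ (J →₀ ℤ)) :
    ∃ (n : ℕ) (G : Finset J),
      ∀ x : ℕ → ℤ, (∀ i < n, x i = 0) → ∀ j ∉ G, h x j = 0 := by
  classical
  by_contra hcon
  push_neg at hcon
  choose X hX0 jf hjG hjne using hcon
  set St : ℕ → ℤ × (ℕ → ℤ) × Finset J :=
    fun n => Nat.rec ((1 : ℤ), (0 : ℕ → ℤ), (∅ : Finset J))
      (fun k p =>
        (p.1 * (1 + |h (X k ((h p.2.1).support ∪ p.2.2)) (jf k ((h p.2.1).support ∪ p.2.2))|),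
         p.2.1 + p.1 • X k ((h p.2.1).support ∪ p.2.2),
         insert (jf k ((h p.2.1).support ∪ p.2.2)) p.2.2)) n with hSt
  set G : ℕ → Finset J := fun k => (h (St k).2.1).support ∪ (St k).2.2 with hG
  refine chase_aux J h (fun n => (St n).1) (fun n => (St n).2.1)
    (fun k => X k (G k)) (fun k => jf k (G k)) (fun n => (St n).2.2)
    rfl rfl (fun k => rfl) (fun k => rfl) (fun k => rfl)
    (fun k => hX0 k (G k)) ?_ ?_ (fun k => hjne k (G k))
  · intro k
    have := hjG k (G k)
    rw [hG] at this
    simp only [Finset.mem_union, Finsupp.mem_support_iff, not_or, not_not] at this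
    exact this.1
  · intro k
    have := hjG k (G k)
    rw [hG] at this
    simp only [Finset.mem_union, not_or] at this
    exact this.2
end

section
/- The first Čech (shape) invariant in the abelian setting: every inverse limit of a sequence of finitely generated free abelian groups with surjective bonding maps is isomorphic to ℤ^n for some finite n, or to ℤ^ω. -/
/-!
Since each `A k` is free, the surjections `f k` have sections `s k`, and a thread `x` of the
inverse limit is determined by `x 0` together with the kernel components
`x (k + 1) - s k (x k)`. Thus the limit is `A 0 × ∏ₖ ker (f k)`. Each kernel is a subgroup of a
finitely generated free abelian group, hence some `ℤ^mₖ`, so the limit is `ℤ^T` for the countable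
set `T = Fin n ⊕ Σ k, Fin mₖ`, and `T` is either finite or in bijection with `ℕ`.
-/

section SequentialLimit

variable {A : ℕ → Type*} [∀ k, AddCommGroup (A k)]

def sequentialLimit (f : ∀ k, A (k + 1) →+ A k) : AddSubgroup (∀ k, A k) where
  carrier := {x | ∀ k, f k (x (k + 1)) = x k}
  add_mem' hx hy k := by simp [hx k, hy k]
  zero_mem' k := by simp
  neg_mem' hx k := by simp [hx k]

variable {f : ∀ k, A (k + 1) →+ A k}

def threadOfSplitting (s : ∀ k, A k →+ A (k + 1)) (a : A 0) (c : ∀ k, (f k).ker) : ∀ k, A k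
  | 0 => a
  | k + 1 => s k (threadOfSplitting s a c k) + c k

variable {s : ∀ k, A k →+ A (k + 1)} (hs : ∀ k y, f k (s k y) = y)
include hs

theorem threadOfSplitting_mem (a : A 0) (c : ∀ k, (f k).ker) :
    threadOfSplitting s a c ∈ sequentialLimit f := fun k => by
  simp [threadOfSplitting, hs, AddMonoidHom.mem_ker.mp (c k).2]

def sequentialLimitEquivProdKer : sequentialLimit f ≃+ A 0 × ∀ k, (f k).ker where
  toFun x := (x.1 0, fun k => ⟨x.1 (k + 1) - s k (x.1 k), by simp [hs, x.2 k]⟩)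
  invFun p := ⟨threadOfSplitting s p.1 p.2, threadOfSplitting_mem hs p.1 p.2⟩
  left_inv x := by
    ext k
    dsimp only
    induction k with
    | zero => rfl
    | succ k ih => rw [threadOfSplitting, ih, add_sub_cancel]
  right_inv p := by
    ext k
    · rfl
    · simp [threadOfSplitting]
  map_add' x y := by
    ext k
    · rfl
    · simp only [AddSubgroup.coe_add, Pi.add_apply, map_add, Prod.snd_add]
      abel

end SequentialLimit

theorem AddMonoidHom.exists_section_of_surjective {B C : Type*} [AddCommGroup B]
    [AddCommGroup C] [Module.Projective ℤ C] (g : B →+ C) (hg : Function.Surjective g) :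
    ∃ s : C →+ B, ∀ y, g (s y) = y := by
  obtain ⟨s, hs⟩ := Module.projective_lifting_property g.toIntLinearMap LinearMap.id hg
  exact ⟨s.toAddMonoidHom, LinearMap.congr_fun hs⟩

theorem AddSubgroup.exists_addEquiv_fin_int {G : Type*} [AddCommGroup G] [Module.Free ℤ G]
    [Module.Finite ℤ G] (H : AddSubgroup G) : ∃ m : ℕ, Nonempty (H ≃+ (Fin m → ℤ)) := by
  obtain ⟨m, ⟨b⟩⟩ := H.toIntSubmodule.nonempty_basis_of_pid (Module.finBasis ℤ G)
  exact ⟨m, ⟨b.equivFun.toAddEquiv⟩⟩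

def AddEquiv.sumSigmaArrowEquivProdPiArrow (M I : Type*) {ι : Type*} (J : ι → Type*)
    [AddCommMonoid M] : ((I ⊕ Σ i, J i) → M) ≃+ (I → M) × ∀ i, J i → M :=
  (LinearEquiv.sumPiEquivProdPi ℕ _ _ fun _ => M).toAddEquiv.trans
    ((AddEquiv.refl _).prodCongr (LinearEquiv.piCurry ℕ fun _ _ => M).toAddEquiv)

theorem nonempty_arrow_addEquiv_fin_or_nat (M T : Type*) [Add M] [Countable T] :
    (∃ n : ℕ, Nonempty ((T → M) ≃+ (Fin n → M))) ∨ Nonempty ((T → M) ≃+ (ℕ → M)) := by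
  rcases finite_or_infinite T with hT | hT
  · exact .inl ⟨_, ⟨AddEquiv.arrowCongr (Finite.equivFin T) (AddEquiv.refl M)⟩⟩
  · obtain ⟨_⟩ := nonempty_denumerable T
    exact .inr ⟨AddEquiv.arrowCongr (Denumerable.eqv T) (AddEquiv.refl M)⟩

/-- The inverse limit of a sequence of finitely generated free abelian groups
with surjective bonding maps is isomorphic to ℤ^n for some n, or to ℤ^ω. -/
theorem inverse_limit_fg_free_abelian (A : ℕ → Type) [∀ k, AddCommGroup (A k)]
    (hfree : ∀ k, ∃ n : ℕ, Nonempty (A k ≃+ (Fin n → ℤ)))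
    (f : ∀ k, A (k + 1) →+ A k) (hsurj : ∀ k, Function.Surjective (f k))
    (L : AddSubgroup (∀ k, A k))
    (hL : (L : Set (∀ k, A k)) = {x | ∀ k, f k (x (k + 1)) = x k}) :
    (∃ n : ℕ, Nonempty (L ≃+ (Fin n → ℤ))) ∨ Nonempty (L ≃+ (ℕ → ℤ)) := by
  obtain rfl : L = sequentialLimit f := SetLike.coe_injective hL
  choose r hr using hfree
  have e := fun k => (hr k).some
  have : ∀ k, Module.Free ℤ (A k) := fun k => .of_equiv (e k).toIntLinearEquiv.symm
  have : ∀ k, Module.Finite ℤ (A k) := fun k => .equiv (e k).toIntLinearEquiv.symm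
  choose s hs using fun k => (f k).exists_section_of_surjective (hsurj k)
  choose m hm using fun k => (f k).ker.exists_addEquiv_fin_int
  let E : sequentialLimit f ≃+ ((Fin (r 0) ⊕ Σ k, Fin (m k)) → ℤ) :=
    ((sequentialLimitEquivProdKer hs).trans
      ((e 0).prodCongr (AddEquiv.piCongrRight fun k => (hm k).some))).trans
      (AddEquiv.sumSigmaArrowEquivProdPiArrow ℤ _ _).symm
  rcases nonempty_arrow_addEquiv_fin_or_nat ℤ (Fin (r 0) ⊕ Σ k, Fin (m k)) with ⟨N, ⟨F⟩⟩ | ⟨⟨F⟩⟩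
  · exact .inl ⟨N, ⟨E.trans F⟩⟩
  · exact .inr ⟨E.trans F⟩
end
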